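/- arXiv:1111.6685 — 5 statements merged into one kernel-verified Lean document; each statement's English description precedes it below -/
import Mathlib

section
/- Let v be a vertex of the social network (G, θ), and let θ₁ be the threshold function on G − v that agrees with θ except θ₁(x) = θ(x) − 1 for every neighbor x of v. Then for S ⊆ V(G) \ {v}, the set S influences all vertices of (G − v, θ₁) if and only if S ∪ {v} influences all vertices of (G, θ). -/
/-- A set `A ⊆ W` is activation-closed in the subgraph of `G` induced by `W`:
every vertex of `W` having at least `θ v` neighbors (within `W`) in `A`
already belongs to `A`. -/
def activationClosedIn {V : Type*} [Fintype V] (G : SimpleGraph V) (θ : V → ℤ)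
    (W A : Set V) : Prop :=
  ∀ v ∈ W, θ v ≤ ((A ∩ G.neighborSet v ∩ W).ncard : ℤ) → v ∈ A

/-- The activation closure `[S]_θ` computed in the subgraph of `G` induced by `W`:
the smallest activation-closed (in `W`) subset of `W` containing `S`. -/
def activationClosureIn {V : Type*} [Fintype V] (G : SimpleGraph V) (θ : V → ℤ)
    (W S : Set V) : Set V :=
  ⋂₀ {A : Set V | S ⊆ A ∧ A ⊆ W ∧ activationClosedIn G θ W A}

/-- The minimum size of a target set influencing all of the subgraph of `G`
induced by `W`. -/
noncomputable def minSeedIn {V : Type*} [Fintype V] (G : SimpleGraph V)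
    (θ : V → ℤ) (W : Set V) : ℕ :=
  sInf {m : ℕ | ∃ S : Set V, S ⊆ W ∧ activationClosureIn G θ W S = W ∧ S.ncard = m}

lemma subset_closure' {V : Type*} [Fintype V] (G : SimpleGraph V) (θ : V → ℤ)
    (W S : Set V) : S ⊆ activationClosureIn G θ W S :=
  Set.subset_sInter fun _ hA => hA.1

lemma closure_subset_W' {V : Type*} [Fintype V] (G : SimpleGraph V) (θ : V → ℤ)
    (W S : Set V) (hS : S ⊆ W) : activationClosureIn G θ W S ⊆ W :=
  Set.sInter_subset_of_mem ⟨hS, subset_rfl, fun u hu _ => hu⟩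

lemma closure_closed' {V : Type*} [Fintype V] (G : SimpleGraph V) (θ : V → ℤ)
    (W S : Set V) : activationClosedIn G θ W (activationClosureIn G θ W S) := by
  intro u hu hcard
  refine Set.mem_sInter.2 fun A hA => hA.2.2 u hu (le_trans hcard ?_)
  exact_mod_cast Nat.cast_le.2 (Set.ncard_le_ncard
    (Set.inter_subset_inter_left W
      (Set.inter_subset_inter_left _ (Set.sInter_subset_of_mem hA)))
    (Set.toFinite _))

/-- Claim: for a vertex `v` and the threshold `θ₁` on `G - v` lowering the
threshold of each neighbor of `v` by one, a set `S ⊆ V \ {v}` influences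
all of `(G - v, θ₁)` iff `S ∪ {v}` influences all of `(G, θ)`. -/
theorem influence_delete_vertex {V : Type*} [Fintype V] (G : SimpleGraph V) [DecidableRel G.Adj]
    (θ : V → ℤ) (v : V)
    (θ₁ : V → ℤ) (hθ₁ : ∀ x, θ₁ x = if G.Adj v x then θ x - 1 else θ x)
    (S : Set V) (hS : S ⊆ {v}ᶜ) :
    activationClosureIn G θ₁ ({v}ᶜ) S = ({v}ᶜ : Set V) ↔
      activationClosureIn G θ Set.univ (S ∪ {v}) = Set.univ := by
  set C₁ := activationClosureIn G θ₁ ({v}ᶜ) S with hC₁def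
  set C := activationClosureIn G θ Set.univ (S ∪ {v}) with hCdef
  have hC₁sub : C₁ ⊆ {v}ᶜ := closure_subset_W' _ _ _ _ hS
  have hvC₁ : v ∉ C₁ := fun h => (hC₁sub h) rfl
  have hvC : v ∈ C := subset_closure' _ _ _ _ (Or.inr rfl)
  -- C ⊆ C₁ ∪ {v}
  have h1 : C ⊆ C₁ ∪ {v} := by
    apply Set.sInter_subset_of_mem
    refine ⟨Set.union_subset_union_left _ (subset_closure' G θ₁ ({v}ᶜ) S),
      Set.subset_univ _, ?_⟩
    intro u _ hcard
    by_cases huv : u = v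
    · exact Or.inr (by simp [huv])
    · left
      apply closure_closed' G θ₁ ({v}ᶜ) S u (by simpa using huv)
      have heq : C₁ ∩ G.neighborSet u ∩ {v}ᶜ = C₁ ∩ G.neighborSet u := by
        ext x
        simp only [Set.mem_inter_iff, Set.mem_compl_iff, Set.mem_singleton_iff]
        exact ⟨fun h => h.1, fun h => ⟨h, fun hxv => (hC₁sub h.1) hxv⟩⟩
      rw [heq, hθ₁ u]
      by_cases hadj : G.Adj v u
      · have hset : (C₁ ∪ {v}) ∩ G.neighborSet u ∩ Set.univ
            = insert v (C₁ ∩ G.neighborSet u) := by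
          ext x
          simp only [Set.inter_univ, Set.mem_inter_iff, Set.mem_union,
            Set.mem_singleton_iff, Set.mem_insert_iff, SimpleGraph.mem_neighborSet]
          constructor
          · rintro ⟨hx1 | rfl, hx2⟩
            · exact Or.inr ⟨hx1, hx2⟩
            · exact Or.inl rfl
          · rintro (rfl | ⟨hx1, hx2⟩)
            · exact ⟨Or.inr rfl, hadj.symm⟩
            · exact ⟨Or.inl hx1, hx2⟩
        rw [hset] at hcard
        have hni : v ∉ C₁ ∩ G.neighborSet u := fun h => hvC₁ h.1
        rw [Set.ncard_insert_of_notMem hni (Set.toFinite _)] at hcard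
        rw [if_pos hadj]
        push_cast at hcard ⊢
        linarith
      · have hset : (C₁ ∪ {v}) ∩ G.neighborSet u ∩ Set.univ
            = C₁ ∩ G.neighborSet u := by
          ext x
          simp only [Set.inter_univ, Set.mem_inter_iff, Set.mem_union,
            Set.mem_singleton_iff, SimpleGraph.mem_neighborSet]
          constructor
          · rintro ⟨hx1 | rfl, hx2⟩
            · exact ⟨hx1, hx2⟩
            · exact absurd hx2.symm hadj
          · rintro ⟨hx1, hx2⟩; exact ⟨Or.inl hx1, hx2⟩
        rw [hset] at hcard
        rw [if_neg hadj]
        exact hcard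
  -- C₁ ⊆ C \ {v}
  have h2 : C₁ ⊆ C \ {v} := by
    apply Set.sInter_subset_of_mem
    refine ⟨fun x hx => ⟨subset_closure' G θ Set.univ (S ∪ {v}) (Or.inl hx), hS hx⟩,
      fun x hx => hx.2, ?_⟩
    intro u hu hcard
    have huv : u ≠ v := hu
    have heq : (C \ {v}) ∩ G.neighborSet u ∩ {v}ᶜ
        = (C ∩ G.neighborSet u) \ {v} := by
      ext x
      simp only [Set.mem_inter_iff, Set.mem_diff, Set.mem_compl_iff,
        Set.mem_singleton_iff]
      tauto
    rw [heq] at hcard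
    have hmem : u ∈ C := by
      apply closure_closed' G θ Set.univ (S ∪ {v}) u (Set.mem_univ u)
      rw [hθ₁ u] at hcard
      by_cases hadj : G.Adj v u
      · have hset : C ∩ G.neighborSet u ∩ Set.univ
            = insert v ((C ∩ G.neighborSet u) \ {v}) := by
          rw [Set.inter_univ, Set.insert_diff_singleton, Set.insert_eq_of_mem]
          exact ⟨hvC, hadj.symm⟩
        rw [hset, Set.ncard_insert_of_notMem (fun h => h.2 rfl) (Set.toFinite _)]
        rw [if_pos hadj] at hcard
        push_cast at hcard ⊢
        linarith
      · have hset : C ∩ G.neighborSet u ∩ Set.univ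
            = (C ∩ G.neighborSet u) \ {v} := by
          rw [Set.inter_univ]
          ext x
          simp only [Set.mem_inter_iff, Set.mem_diff, Set.mem_singleton_iff,
            SimpleGraph.mem_neighborSet]
          refine ⟨fun h => ⟨h, fun hxv => hadj (hxv ▸ h.2).symm⟩, fun h => h.1⟩
        rw [hset]
        rw [if_neg hadj] at hcard
        exact hcard
    exact ⟨hmem, huv⟩
  constructor
  · intro h
    apply Set.eq_univ_of_forall
    intro x
    by_cases hxv : x = v
    · exact hxv ▸ hvC
    · exact (h2 (h ▸ (hxv : x ∈ ({v}ᶜ : Set V)))).1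
  · intro h
    refine Set.Subset.antisymm hC₁sub fun x hx => ?_
    have : x ∈ C := h ▸ Set.mem_univ x
    rcases h1 this with hx1 | hx1
    · exact hx1
    · exact absurd hx1 hx
end

section
/- Let G be a t-connected chordal graph with t ≥ 2 and threshold function θ satisfying θ(x) ≤ t for all vertices x. If S ⊆ V(G) induces a complete subgraph of size t in G, then the activation closure of S under θ equals V(G). -/
/-- A set `A` is closed under activation: every vertex with at least `θ v`
neighbors in `A` already belongs to `A`. -/
def activationClosed {V : Type*} [Fintype V] (G : SimpleGraph V) (θ : V → ℤ)
    (A : Set V) : Prop :=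
  ∀ v : V, θ v ≤ ((A ∩ G.neighborSet v).ncard : ℤ) → v ∈ A

/-- The activation closure `[S]_θ`: the smallest activation-closed superset of `S`. -/
def activationClosure {V : Type*} [Fintype V] (G : SimpleGraph V) (θ : V → ℤ)
    (S : Set V) : Set V :=
  ⋂₀ {A : Set V | S ⊆ A ∧ activationClosed G θ A}

/-- `min-seed(G, θ)`: the minimum size of a target set influencing all of `G`. -/
noncomputable def minSeed {V : Type*} [Fintype V] (G : SimpleGraph V)
    (θ : V → ℤ) : ℕ :=
  sInf {m : ℕ | ∃ S : Set V, activationClosure G θ S = Set.univ ∧ S.ncard = m}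

/-- A graph is chordal if it contains no induced cycle of length greater than 3. -/
def IsChordal {V : Type*} (G : SimpleGraph V) : Prop :=
  ∀ n : ℕ, 4 ≤ n → IsEmpty (SimpleGraph.cycleGraph n ↪g G)

/-- `G` is `t`-connected: more than `t` vertices, and deleting any fewer than `t`
vertices leaves a connected graph. -/
def TConnected {V : Type*} [Fintype V] (G : SimpleGraph V) (t : ℕ) : Prop :=
  t < Fintype.card V ∧
    ∀ K : Set V, K.ncard < t → (G.induce (Kᶜ : Set V)).Connected

/-!
Induct on the number of vertices. In a chordal graph, a clique `S` that is not the whole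
vertex set misses a simplicial vertex `v` (Dirac's lemma), and deleting a simplicial vertex
keeps a `t`-connected graph `t`-connected, because a path through `v` can be shortcut between
the two neighbours of `v` it uses. By induction every vertex other than `v` is activated, and
then so is `v`: `t`-connectivity forces it to have at least `t ≥ θ v` neighbours.

Dirac's lemma rests on minimal separators of chordal graphs being cliques: two non-adjacent
vertices of a minimal separator both have neighbours in each of the two components it
separates, and shortest paths through the two components close an induced cycle of length at
least four.
-/

open Set

namespace SimpleGraph

variable {V : Type*} {G : SimpleGraph V} {s s' U K S : Set V} {a b c v x y : V}

def ReachableIn (G : SimpleGraph V) (s : Set V) (a b : V) : Prop :=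
  ∃ w : G.Walk a b, ∀ x ∈ w.support, x ∈ s

namespace ReachableIn

theorem right_mem (h : G.ReachableIn s a b) : b ∈ s :=
  h.elim fun w hw => hw _ w.end_mem_support

theorem refl (ha : a ∈ s) : G.ReachableIn s a a :=
  ⟨.nil, by simpa using ha⟩

theorem symm (h : G.ReachableIn s a b) : G.ReachableIn s b a := by
  obtain ⟨w, hw⟩ := h
  exact ⟨w.reverse, by simpa using hw⟩

theorem trans (h : G.ReachableIn s a b) (h' : G.ReachableIn s b c) : G.ReachableIn s a c := by
  obtain ⟨w, hw⟩ := h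
  obtain ⟨w', hw'⟩ := h'
  exact ⟨w.append w', fun x hx =>
    (Walk.mem_support_append_iff _ _).1 hx |>.elim (hw x) (hw' x)⟩

theorem cons (ha : a ∈ s) (hab : G.Adj a b) (h : G.ReachableIn s b c) :
    G.ReachableIn s a c := by
  obtain ⟨w, hw⟩ := h
  exact ⟨.cons hab w, by simpa [ha] using hw⟩

theorem of_adj (ha : a ∈ s) (hb : b ∈ s) (hab : G.Adj a b) : G.ReachableIn s a b :=
  cons ha hab (refl hb)

theorem mono (h : G.ReachableIn s a b) (hs : s ⊆ s') : G.ReachableIn s' a b := by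
  obtain ⟨w, hw⟩ := h
  exact ⟨w, fun x hx => hs (hw x hx)⟩

theorem exists_adj (h : G.ReachableIn s a b) (hab : a ≠ b) : ∃ c ∈ s, G.Adj a c := by
  obtain ⟨_ | ⟨hac, w⟩, hw⟩ := h
  · exact absurd rfl hab
  · exact ⟨_, hw _ (by simp), hac⟩

theorem mem_of_forall_adj {C : Set V} (h : G.ReachableIn s a b) (ha : a ∈ C)
    (hC : ∀ u ∈ C, ∀ w ∈ s, G.Adj u w → w ∈ C) : b ∈ C := by
  obtain ⟨w, hw⟩ := h
  induction w with
  | nil => exact ha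
  | cons hac w ih => exact ih (hC _ ha _ (hw _ (by simp)) hac) fun x hx => hw x (by simp [hx])

theorem within_component (h : G.ReachableIn s b c) (hb : G.ReachableIn s a b) :
    G.ReachableIn {x | G.ReachableIn s a x} b c := by
  obtain ⟨w, hw⟩ := h
  induction w with
  | nil => exact refl hb
  | cons hbd w ih =>
    have hd : G.ReachableIn s a _ := hb.trans (of_adj hb.right_mem (hw _ (by simp)) hbd)
    exact cons hb hbd (ih hd fun x hx => hw x (by simp [hx]))

theorem sdiff_singleton (h : G.ReachableIn s a b) (hv : G.IsClique (G.neighborSet v ∩ s))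
    (ha : a ≠ v) (hb : b ≠ v) : G.ReachableIn (s \ {v}) a b := by
  -- While the walk sits at `v`, `a` is the vertex it came from, a neighbour of `v`.
  suffices key : ∀ {c} (w : G.Walk c b), (∀ x ∈ w.support, x ∈ s) →
      ∀ a ∈ s, a ≠ v → a = c ∨ (c = v ∧ G.Adj a v) → G.ReachableIn (s \ {v}) a b from
    h.elim fun w hw => key w hw a (hw _ w.start_mem_support) ha (.inl rfl)
  clear h ha
  intro c w
  induction w with
  | nil => rintro _ a has hav (rfl | ⟨rfl, -⟩); exacts [refl ⟨has, hav⟩, absurd rfl hb]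
  | @cons c d _ hcd w ih =>
    intro hw a has hav hac
    have hds : d ∈ s := hw _ (by simp)
    have hws : ∀ x ∈ w.support, x ∈ s := fun x hx => hw x (by simp [hx])
    by_cases hdv : d = v
    · subst hdv
      obtain rfl : a = c := hac.resolve_right fun h => G.irrefl (h.1 ▸ hcd)
      exact ih hb hws a has hav (.inr ⟨rfl, hcd⟩)
    · have hdb := ih hb hws d hds hdv (.inl rfl)
      have had : a = d ∨ G.Adj a d := by
        rcases hac with rfl | ⟨rfl, hav'⟩
        · exact .inr hcd
        · exact or_iff_not_imp_left.2 (hv ⟨hav'.symm, has⟩ ⟨hcd, hds⟩)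
      rcases had with rfl | had
      · exact hdb
      · exact cons ⟨has, hav⟩ had hdb

theorem neighborSet_inter_subset {U K : Set V} (h : G.ReachableIn (U \ K) a b) :
    G.neighborSet b ∩ U ⊆ {x | G.ReachableIn (U \ K) a x} ∪ K :=
  fun c ⟨hbc, hc⟩ => (em (c ∈ K)).elim .inr fun hcK =>
    .inl (h.trans (.of_adj h.right_mem ⟨hc, hcK⟩ hbc))

end ReachableIn

theorem reachableIn_of_induce_reachable {x y : s} (h : (G.induce s).Reachable x y) :
    G.ReachableIn s x y := by
  obtain ⟨w⟩ := h
  induction w with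
  | nil => exact .refl (Subtype.prop _)
  | cons hxy _ ih => exact .cons (Subtype.prop _) hxy ih

def IsInducedPath (G : SimpleGraph V) (P : ℕ → V) (n : ℕ) : Prop :=
  ∀ i j, i < j → j ≤ n → P i ≠ P j ∧ (G.Adj (P i) (P j) ↔ j = i + 1)

def IsInducedCycle (G : SimpleGraph V) (f : ℕ → V) (n : ℕ) : Prop :=
  ∀ i j, i < j → j < n →
    f i ≠ f j ∧ (G.Adj (f i) (f j) ↔ j = i + 1 ∨ (i = 0 ∧ j + 1 = n))

theorem cycleGraph_adj_of_lt {n : ℕ} {i j : Fin n} (hij : i < j) :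
    (cycleGraph n).Adj i j ↔ (j : ℕ) = i + 1 ∨ ((i : ℕ) = 0 ∧ (j : ℕ) + 1 = n) := by
  rw [cycleGraph_adj', Fin.coe_sub_iff_lt.2 hij, Fin.coe_sub_iff_le.2 hij.le]
  omega

theorem _root_.IsChordal.lt_four_of_isInducedCycle (hG : IsChordal G) {f : ℕ → V} {n : ℕ}
    (hf : G.IsInducedCycle f n) : n < 4 := by
  by_contra! hn
  have key : ∀ i j : Fin n, i < j →
      f i ≠ f j ∧ (G.Adj (f i) (f j) ↔ (cycleGraph n).Adj i j) :=
    fun i j hij => by rw [cycleGraph_adj_of_lt hij]; exact hf i j hij j.2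
  refine (hG n hn).false ⟨⟨fun i => f i, fun i j hij => ?_⟩, fun {i j} => ?_⟩
  · by_contra hne
    rcases lt_or_gt_of_ne hne with h | h
    exacts [(key i j h).1 hij, (key j i h).1 hij.symm]
  · rcases lt_trichotomy i j with h | rfl | h
    · exact (key i j h).2
    · exact iff_of_false (G.irrefl) (cycleGraph n).irrefl
    · rw [G.adj_comm, (cycleGraph n).adj_comm]
      exact (key j i h).2

namespace IsInducedPath

variable {P Q : ℕ → V} {p q : ℕ}

theorem two_le (hP : G.IsInducedPath P p) (hne : P 0 ≠ P p) (hnadj : ¬ G.Adj (P 0) (P p)) :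
    2 ≤ p := by
  by_contra! hp
  interval_cases p
  · exact hne rfl
  · exact hnadj ((hP 0 1 one_pos le_rfl).2.2 rfl)

theorem mem_of_pos_of_lt {C : Set V} (hP : G.IsInducedPath P p)
    (hC : ∀ i ≤ p, P i ∈ insert (P 0) (insert (P p) C)) {i : ℕ} (h0 : 0 < i) (hi : i < p) :
    P i ∈ C := by
  rcases hC i hi.le with h | h | h
  exacts [absurd h.symm (hP 0 i h0 hi.le).1, absurd h (hP i p hi le_rfl).1, h]

theorem isInducedCycle_append_reverse (hP : G.IsInducedPath P p) (hQ : G.IsInducedPath Q q)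
    (h0 : P 0 = Q 0) (hpq : P p = Q q) (hp : 2 ≤ p) (hq : 2 ≤ q)
    (hPQ : ∀ i j, 0 < i → i < p → 0 < j → j < q → P i ≠ Q j ∧ ¬ G.Adj (P i) (Q j)) :
    G.IsInducedCycle (fun i => if i ≤ p then P i else Q (p + q - i)) (p + q) := by
  set g : ℕ → V := fun i => if i ≤ p then P i else Q (p + q - i)
  have hgP : ∀ i ≤ p, g i = P i := fun i hi => if_pos hi
  have hgQ : ∀ i, p ≤ i → g i = Q (p + q - i) := by
    intro i hi
    rcases hi.eq_or_lt with rfl | hi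
    · simp [g, hpq]
    · exact if_neg (by omega)
  intro i j hij hj
  by_cases hjp : j ≤ p
  · rw [hgP i (by omega), hgP j hjp]
    obtain ⟨hne, hadj⟩ := hP i j hij hjp
    exact ⟨hne, by rw [hadj]; omega⟩
  by_cases hip : p ≤ i
  · rw [hgQ i hip, hgQ j (by omega)]
    obtain ⟨hne, hadj⟩ := hQ (p + q - j) (p + q - i) (by omega) (by omega)
    exact ⟨hne.symm, by rw [G.adj_comm, hadj]; omega⟩
  rw [hgP i (by omega), hgQ j (by omega)]
  rcases Nat.eq_zero_or_pos i with rfl | hi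
  · obtain ⟨hne, hadj⟩ := hQ 0 (p + q - j) (by omega) (by omega)
    exact ⟨h0 ▸ hne, by rw [h0, hadj]; omega⟩
  · obtain ⟨hne, hnadj⟩ := hPQ i (p + q - j) hi (by omega) (by omega) (by omega)
    exact ⟨hne, iff_of_false hnadj (by omega)⟩

end IsInducedPath

theorem ReachableIn.exists_isInducedPath (h : G.ReachableIn s a b) :
    ∃ (P : ℕ → V) (n : ℕ),
      P 0 = a ∧ P n = b ∧ (∀ i ≤ n, P i ∈ s) ∧ G.IsInducedPath P n := by
  classical
  have hex : ∃ n, ∃ w : G.Walk a b, (∀ x ∈ w.support, x ∈ s) ∧ w.length = n :=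
    h.elim fun w hw => ⟨_, w, hw, rfl⟩
  -- A shortest walk inside `s` is an induced path.
  obtain ⟨w, hw, hlen⟩ := Nat.find_spec hex
  have shortcut : ∀ {i j : ℕ} (q : G.Walk (w.getVert i) (w.getVert j)),
      (∀ x ∈ q.support, x ∈ s) → w.length ≤ i + q.length + (w.length - j) := by
    intro i j q hq
    have hsub : ∀ x ∈ ((w.take i).append (q.append (w.drop j))).support, x ∈ s := by
      simp only [Walk.mem_support_append_iff]
      rintro x (hx | hx | hx)
      exacts [hw x ((w.isSubwalk_take i).support_subset hx), hq x hx,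
        hw x ((w.isSubwalk_drop j).support_subset hx)]
    have := hlen ▸ Nat.find_min' hex ⟨_, hsub, rfl⟩
    simp only [Walk.length_append, Walk.take_length, Walk.drop_length] at this
    omega
  refine ⟨w.getVert, w.length, w.getVert_zero, w.getVert_length,
    fun i _ => hw _ (w.getVert_mem_support i), fun i j hij hj => ⟨fun heq => ?_, ?_⟩⟩
  · have := shortcut (Walk.nil.copy rfl heq) (by simpa using hw _ (w.getVert_mem_support i))
    simp only [Walk.length_copy, Walk.length_nil] at this
    omega
  · refine ⟨fun hadj => ?_, fun hj' => hj' ▸ w.adj_getVert_succ (by omega)⟩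
    have := shortcut hadj.toWalk
      (by simp [hw _ (w.getVert_mem_support i), hw _ (w.getVert_mem_support j)])
    simp only [Walk.length_cons, Walk.length_nil] at this
    omega

theorem _root_.IsChordal.adj_of_reachableIn (hG : IsChordal G) {A B : Set V}
    (hAB : ∀ u ∈ A, ∀ w ∈ B, u ≠ w ∧ ¬ G.Adj u w) (hxy : x ≠ y)
    (hA : G.ReachableIn (insert x (insert y A)) x y)
    (hB : G.ReachableIn (insert x (insert y B)) x y) : G.Adj x y := by
  by_contra hnadj
  obtain ⟨P, p, rfl, rfl, hPA, hP⟩ := hA.exists_isInducedPath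
  obtain ⟨Q, q, hQ0, hQq, hQB, hQ⟩ := hB.exists_isInducedPath
  have hp := hP.two_le hxy hnadj
  have hq := hQ.two_le (hQ0 ▸ hQq ▸ hxy) (hQ0 ▸ hQq ▸ hnadj)
  have hcycle := hP.isInducedCycle_append_reverse hQ hQ0.symm hQq.symm hp hq
    fun i j hi hi' hj hj' => hAB _ (hP.mem_of_pos_of_lt hPA hi hi') _
      (hQ.mem_of_pos_of_lt (hQ0 ▸ hQq ▸ hQB) hj hj')
  have := hG.lt_four_of_isInducedCycle hcycle
  omega

structure Separates (G : SimpleGraph V) (U K : Set V) (a b : V) : Prop where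
  subset : K ⊆ U
  left_mem : a ∈ U \ K
  right_mem : b ∈ U \ K
  not_reachableIn : ¬ G.ReachableIn (U \ K) a b

theorem Separates.symm (h : G.Separates U K a b) : G.Separates U K b a :=
  ⟨h.subset, h.right_mem, h.left_mem, fun hba => h.not_reachableIn hba.symm⟩

theorem separates_sdiff_pair (ha : a ∈ U) (hb : b ∈ U) (hab : a ≠ b) (hnadj : ¬ G.Adj a b) :
    G.Separates U (U \ {a, b}) a b := by
  refine ⟨sdiff_subset, ⟨ha, fun h => h.2 (.inl rfl)⟩, ⟨hb, fun h => h.2 (.inr rfl)⟩,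
    fun h => ?_⟩
  rw [sdiff_sdiff_right_self] at h
  obtain ⟨c, ⟨-, rfl | rfl⟩, hac⟩ := h.exists_adj hab
  exacts [G.irrefl hac, hnadj hac]

theorem exists_separates_ncard_le [Finite V] (ha : a ∈ U) (hb : b ∈ U) (hab : a ≠ b)
    (hnadj : ¬ G.Adj a b) :
    ∃ K, G.Separates U K a b ∧ ∀ K', G.Separates U K' a b → K.ncard ≤ K'.ncard :=
  exists_min_image {K | G.Separates U K a b} ncard (toFinite _)
    ⟨_, separates_sdiff_pair ha hb hab hnadj⟩

section Minimal

variable [Finite V] (hK : G.Separates U K a b)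
  (hmin : ∀ K', G.Separates U K' a b → K.ncard ≤ K'.ncard)
include hK hmin

theorem Separates.exists_adj_of_minimal (hx : x ∈ K) :
    ∃ u, G.ReachableIn (U \ K) a u ∧ G.Adj u x := by
  by_contra! hno
  have hsep : G.Separates U (K \ {x}) a b := by
    refine ⟨sdiff_subset.trans hK.subset, ⟨hK.left_mem.1, fun h => hK.left_mem.2 h.1⟩,
      ⟨hK.right_mem.1, fun h => hK.right_mem.2 h.1⟩, fun hab => hK.not_reachableIn ?_⟩
    refine hab.mem_of_forall_adj (C := {u | G.ReachableIn (U \ K) a u}) (.refl hK.left_mem) ?_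
    intro u hu w hw huw
    have hwK : w ∉ K := fun hwK => by
      obtain rfl : w = x := by_contra fun hwx => hw.2 ⟨hwK, hwx⟩
      exact hno u hu huw
    exact hu.trans (.of_adj hu.right_mem ⟨hw.1, hwK⟩ huw)
  have := hmin _ hsep
  have := ncard_sdiff_singleton_lt_of_mem hx (toFinite K)
  omega

theorem Separates.reachableIn_insert_insert_of_minimal (hx : x ∈ K) (hy : y ∈ K) :
    G.ReachableIn (insert x (insert y {u | G.ReachableIn (U \ K) a u})) x y := by
  obtain ⟨u, hu, hux⟩ := hK.exists_adj_of_minimal hmin hx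
  obtain ⟨w, hw, hwy⟩ := hK.exists_adj_of_minimal hmin hy
  have huw := ((hu.symm.trans hw).within_component hu).mono
    ((subset_insert y _).trans (subset_insert x _))
  exact .cons (mem_insert x _) hux.symm
    (huw.trans (.of_adj huw.right_mem (mem_insert_of_mem x (mem_insert y _)) hwy))

theorem Separates.isClique_of_minimal (hG : IsChordal G) : G.IsClique K := by
  intro x hx y hy hxy
  refine hG.adj_of_reachableIn (fun u hu w hw => ⟨?_, fun huw => ?_⟩) hxy
    (hK.reachableIn_insert_insert_of_minimal hmin hx hy)
    (hK.symm.reachableIn_insert_insert_of_minimal (fun K' h => hmin K' h.symm) hx hy)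
  · rintro rfl
    exact hK.not_reachableIn (hu.trans hw.symm)
  · exact hK.not_reachableIn
      (hu.trans ((ReachableIn.of_adj hu.right_mem hw.right_mem huw).trans hw.symm))

end Minimal

theorem Separates.exists_component_disjoint (hK : G.Separates U K a b) (hS : G.IsClique S) :
    ∃ c d, G.Separates U K c d ∧ ∀ s ∈ S, ¬ G.ReachableIn (U \ K) c s := by
  by_cases ha : ∃ s ∈ S, G.ReachableIn (U \ K) a s
  swap
  · exact ⟨a, b, hK, fun s hs has => ha ⟨s, hs, has⟩⟩
  obtain ⟨s, hs, has⟩ := ha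
  refine ⟨b, a, hK.symm, fun s' hs' hbs' => hK.not_reachableIn ?_⟩
  rcases eq_or_ne s s' with rfl | hss'
  · exact has.trans hbs'.symm
  · exact has.trans ((ReachableIn.of_adj has.right_mem hbs'.right_mem (hS hs hs' hss')).trans
      hbs'.symm)

/-- Dirac's lemma. -/
theorem _root_.IsChordal.exists_isClique_neighborSet_inter [Finite V] (hG : IsChordal G)
    (hSU : S ⊂ U) (hS : G.IsClique S) : ∃ v ∈ U \ S, G.IsClique (G.neighborSet v ∩ U) := by
  induction hn : U.ncard using Nat.strong_induction_on generalizing S U with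
  | _ n ih =>
  obtain ⟨v, hvU, hvS⟩ := exists_of_ssubset hSU
  by_cases hU : G.IsClique U
  · exact ⟨v, ⟨hvU, hvS⟩, hU.subset inter_subset_right⟩
  obtain ⟨a, ha, b, hb, hab, hnadj⟩ : ∃ a ∈ U, ∃ b ∈ U, a ≠ b ∧ ¬ G.Adj a b := by
    simpa [IsClique, Set.Pairwise] using hU
  obtain ⟨K, hK, hmin⟩ := exists_separates_ncard_le ha hb hab hnadj
  obtain ⟨c, d, hcd, hSc⟩ := hK.exists_component_disjoint hS
  set C := {u | G.ReachableIn (U \ K) c u}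
  have hCK : C ∪ K ⊂ U := by
    refine ssubset_of_subset_of_ne (union_subset (fun u hu => hu.right_mem.1) hcd.subset) ?_
    rintro hU
    rcases hU ▸ hcd.right_mem.1 with hdC | hdK
    exacts [hcd.not_reachableIn hdC, hcd.right_mem.2 hdK]
  have hKC : K ⊂ C ∪ K := ssubset_of_subset_of_ne subset_union_right
    fun h => hcd.left_mem.2 (h ▸ .inl (.refl hcd.left_mem))
  obtain ⟨v, ⟨hvC | hvK, hvK'⟩, hv⟩ :=
    ih _ (hn ▸ ncard_lt_ncard hCK) hKC (hK.isClique_of_minimal hmin hG) rfl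
  · exact ⟨v, ⟨hvC.right_mem.1, fun hvS => hSc v hvS hvC⟩,
      hv.subset (subset_inter inter_subset_left hvC.neighborSet_inter_subset)⟩
  · exact absurd hvK hvK'

variable {t : ℕ}

/-- `G[U]` is `t`-connected, phrased inside `G` so that the induction on `U` never passes to
induced subgraphs. -/
def IsVertexConnectedOn (G : SimpleGraph V) (U : Set V) (t : ℕ) : Prop :=
  t < U.ncard ∧
    ∀ K : Set V, K.ncard < t → ∀ a ∈ U \ K, ∀ b ∈ U \ K, G.ReachableIn (U \ K) a b

theorem _root_.TConnected.isVertexConnectedOn_univ [Fintype V] (h : TConnected G t) :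
    G.IsVertexConnectedOn univ t := by
  refine ⟨by rw [ncard_univ, Nat.card_eq_fintype_card]; exact h.1, fun K hK a ha b hb => ?_⟩
  rw [← compl_eq_univ_sdiff] at ha hb ⊢
  exact reachableIn_of_induce_reachable (x := ⟨a, ha⟩) (y := ⟨b, hb⟩)
    ((h.2 K hK).preconnected _ _)

namespace IsVertexConnectedOn

theorem le_ncard_neighborSet_inter [Finite V] (h : G.IsVertexConnectedOn U t) (hv : v ∈ U) :
    t ≤ (G.neighborSet v ∩ U).ncard := by
  by_contra! hlt
  have hvK : v ∈ U \ (G.neighborSet v ∩ U) := ⟨hv, fun h => G.irrefl h.1⟩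
  have : 1 < (U \ (G.neighborSet v ∩ U)).ncard := by
    rw [ncard_sdiff inter_subset_right]
    have := h.1
    omega
  obtain ⟨w, hw, hwv⟩ := exists_ne_of_one_lt_ncard this v
  obtain ⟨c, hc, hvc⟩ := (h.2 _ hlt v hvK w hw).exists_adj hwv.symm
  exact hc.2 ⟨hvc, hc.1⟩

theorem sdiff_singleton (h : G.IsVertexConnectedOn U t) (hU : t + 1 < U.ncard)
    (hv : G.IsClique (G.neighborSet v ∩ U)) : G.IsVertexConnectedOn (U \ {v}) t := by
  refine ⟨by have := pred_ncard_le_ncard_sdiff_singleton U v; omega, fun K hK a ha b hb => ?_⟩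
  rw [sdiff_right_comm] at ha hb ⊢
  exact (h.2 K hK a ha.1 b hb.1).sdiff_singleton
    (hv.subset (inter_subset_inter_right _ sdiff_subset)) ha.2 hb.2

end IsVertexConnectedOn

theorem _root_.IsChordal.subset_of_activationClosed [Fintype V] (hG : IsChordal G)
    {θ : V → ℤ} (hθ : ∀ x, θ x ≤ t) {A : Set V} (hA : activationClosed G θ A)
    (hSA : S ⊆ A) (hS : G.IsClique S) (hSt : S.ncard = t) (hSU : S ⊆ U)
    (hU : G.IsVertexConnectedOn U t) :
    U ⊆ A := by
  induction hn : U.ncard using Nat.strong_induction_on generalizing U with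
  | _ n ih =>
  have hSU' : S ⊂ U := hSU.ssubset_of_ne (by rintro rfl; have := hU.1; omega)
  -- If `U` has only `t + 1` vertices then `U \ {v} = S` for any `v ∈ U \ S`; otherwise take
  -- `v` simplicial and use the induction hypothesis on `U \ {v}`.
  obtain ⟨v, hv, hvA⟩ : ∃ v ∈ U, U \ {v} ⊆ A := by
    rcases (Nat.succ_le_of_lt hU.1).eq_or_lt with hUt | hUt
    · obtain ⟨v, hvU, hvS⟩ := exists_of_ssubset hSU'
      have : S = U \ {v} := eq_of_subset_of_ncard_le (subset_sdiff_singleton hSU hvS)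
        (by rw [ncard_sdiff_singleton_of_mem hvU]; omega)
      exact ⟨v, hvU, this ▸ hSA⟩
    · obtain ⟨v, ⟨hvU, hvS⟩, hv⟩ := hG.exists_isClique_neighborSet_inter hSU' hS
      exact ⟨v, hvU, ih _ (hn ▸ ncard_sdiff_singleton_lt_of_mem hvU)
        (subset_sdiff_singleton hSU hvS) (hU.sdiff_singleton hUt hv) rfl⟩
  intro u hu
  obtain rfl | huv := eq_or_ne u v
  · apply hA
    have hN : G.neighborSet u ∩ U ⊆ A ∩ G.neighborSet u :=
      fun w ⟨huw, hw⟩ => ⟨hvA ⟨hw, huw.ne.symm⟩, huw⟩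
    calc θ u ≤ t := hθ u
      _ ≤ (G.neighborSet u ∩ U).ncard := by exact_mod_cast hU.le_ncard_neighborSet_inter hu
      _ ≤ (A ∩ G.neighborSet u).ncard := by exact_mod_cast ncard_le_ncard hN
  · exact hvA ⟨hu, huv⟩

end SimpleGraph

theorem clique_seed_activates_chordal_general {V : Type*} [Fintype V] (G : SimpleGraph V)
    (t : ℕ) (hconn : TConnected G t) (hchordal : IsChordal G)
    (θ : V → ℤ) (hθ : ∀ x, θ x ≤ (t : ℤ))
    (S : Set V) (hScard : S.ncard = t)
    (hSclique : ∀ x ∈ S, ∀ y ∈ S, x ≠ y → G.Adj x y) :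
    activationClosure G θ S = Set.univ := by
  rw [activationClosure, sInter_eq_univ]
  rintro A ⟨hSA, hA⟩
  exact univ_subset_iff.1 <| hchordal.subset_of_activationClosed hθ hA hSA
    (fun x hx y hy => hSclique x hx y hy) hScard (subset_univ S) hconn.isVertexConnectedOn_univ

theorem clique_seed_activates_chordal {V : Type*} [Fintype V] (G : SimpleGraph V)
    (t : ℕ) (ht : 2 ≤ t) (hconn : TConnected G t) (hchordal : IsChordal G)
    (θ : V → ℤ) (hθ : ∀ x, θ x ≤ (t : ℤ))
    (S : Set V) (hScard : S.ncard = t)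
    (hSclique : ∀ x ∈ S, ∀ y ∈ S, x ≠ y → G.Adj x y) :
    activationClosure G θ S = Set.univ :=
  clique_seed_activates_chordal_general G t hconn hchordal θ hθ S hScard hSclique
end

section
/- Let G be a t-connected chordal graph with t ≥ 2 and threshold function θ with θ(x) ≤ t for every vertex x and θ(v) < t for at least one vertex v. Then min-seed(G, θ) < t. -/
/-!
Seed a `t`-clique `K` through `v` minus `v` itself: `v` then has `t - 1 ≥ θ v` active neighbours,
and since `θ ≤ t`, every common neighbour of an active `t`-clique becomes active. It remains to see
that in a `t`-connected chordal graph every vertex is reached from `K` through `t`-cliques, each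
obtained from the previous one by replacing a vertex with a common neighbour of the whole clique.
The key fact: for `|X| < t`, a shortest walk in `G - X` between vertices adjacent to all of `X` is
an induced path, so by chordality all of its vertices are adjacent to all of `X`.
-/

section

variable {V : Type*} {G : SimpleGraph V}

theorem cycleGraph_adj_iff_val {n : ℕ} {a b : Fin (n + 2)} :
    (SimpleGraph.cycleGraph (n + 2)).Adj a b ↔ a.val + 1 = b.val ∨ b.val + 1 = a.val ∨
      (a.val = n + 1 ∧ b.val = 0) ∨ (b.val = n + 1 ∧ a.val = 0) := by
  rw [SimpleGraph.cycleGraph_adj, sub_eq_iff_eq_add', sub_eq_iff_eq_add', Fin.ext_iff, Fin.ext_iff,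
    Fin.val_add_one, Fin.val_add_one]
  split_ifs with h1 h2 h2 <;> simp only [Fin.ext_iff, Fin.val_last] at h1 h2 <;> omega

def IsInducedPath (G : SimpleGraph V) (p : ℕ → V) (s : ℕ) : Prop :=
  Set.InjOn p (Set.Iic s) ∧ ∀ i ≤ s, ∀ j ≤ s, G.Adj (p i) (p j) ↔ i + 1 = j ∨ j + 1 = i

theorem IsInducedPath.of_le {p : ℕ → V} {s r : ℕ} (hp : IsInducedPath G p s) (hr : r ≤ s) :
    IsInducedPath G p r :=
  ⟨hp.1.mono (Set.Iic_subset_Iic.2 hr), fun i hi j hj => hp.2 i (hi.trans hr) j (hj.trans hr)⟩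

theorem IsInducedPath.drop {p : ℕ → V} {s r : ℕ} (hp : IsInducedPath G p s) (hr : r ≤ s) :
    IsInducedPath G (fun k => p (r + k)) (s - r) := by
  refine ⟨fun i hi j hj hij => ?_, fun i hi j hj => ?_⟩
  · rw [Set.mem_Iic] at hi hj
    have := hp.1 (Set.mem_Iic.2 (by omega : r + i ≤ s)) (Set.mem_Iic.2 (by omega : r + j ≤ s)) hij
    omega
  · rw [hp.2 (r + i) (by omega) (r + j) (by omega)]
    omega

theorem IsInducedPath.nonempty_cycleGraph_embedding {p : ℕ → V} {s : ℕ} {x : V}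
    (hp : IsInducedPath G p s) (hxp : ∀ i ≤ s, p i ≠ x)
    (hx : ∀ i ≤ s, G.Adj x (p i) ↔ i = 0 ∨ i = s) :
    Nonempty (SimpleGraph.cycleGraph (s + 2) ↪g G) := by
  let c : Fin (s + 2) → V := fun k => if k.val ≤ s then p k else x
  have hc_inj : Function.Injective c := by
    intro a b hab
    simp only [c] at hab
    split_ifs at hab with ha hb hb
    · exact Fin.ext (hp.1 ha hb hab)
    · exact absurd hab (hxp a ha)
    · exact absurd hab.symm (hxp b hb)
    · exact Fin.ext (by omega)
  refine ⟨⟨⟨c, hc_inj⟩, fun {a b} => ?_⟩⟩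
  change G.Adj (c a) (c b) ↔ _
  rw [cycleGraph_adj_iff_val]
  simp only [c]
  split_ifs with ha hb hb
  · rw [hp.2 a ha b hb]; omega
  · rw [G.adj_comm, hx a ha]; omega
  · rw [hx b hb]; omega
  · simp only [SimpleGraph.irrefl, false_iff]; omega

theorem IsChordal.exists_adj_interior {p : ℕ → V} {s : ℕ} {x : V} (hG : IsChordal G)
    (hp : IsInducedPath G p s) (hs : 2 ≤ s) (hxp : ∀ i ≤ s, p i ≠ x) (h0 : G.Adj x (p 0))
    (hs' : G.Adj x (p s)) : ∃ i, 0 < i ∧ i < s ∧ G.Adj x (p i) := by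
  by_contra! hnone
  have hx : ∀ i ≤ s, G.Adj x (p i) ↔ i = 0 ∨ i = s := by
    intro i hi
    refine ⟨fun h => ?_, ?_⟩
    · by_contra! hne
      exact hnone i (by omega) (by omega) h
    · rintro (rfl | rfl) <;> assumption
  exact (hG (s + 2) (by omega)).false (hp.nonempty_cycleGraph_embedding hxp hx).some

/-- An interior neighbour of `x` splits the path into two shorter ones. -/
theorem IsChordal.adj_of_adj_ends {p : ℕ → V} {s : ℕ} {x : V} (hG : IsChordal G)
    (hp : IsInducedPath G p s) (hxp : ∀ i ≤ s, p i ≠ x) (h0 : G.Adj x (p 0))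
    (hs : G.Adj x (p s)) : ∀ i ≤ s, G.Adj x (p i) := by
  induction s using Nat.strong_induction_on generalizing p with
  | _ s ih =>
    intro i hi
    by_cases hs2 : s < 2
    · interval_cases s <;> interval_cases i <;> assumption
    obtain ⟨m, hm0, hms, hm⟩ := hG.exists_adj_interior hp (by omega) hxp h0 hs
    rcases le_total i m with him | hmi
    · exact ih m hms (hp.of_le hms.le) (fun j hj => hxp j (hj.trans hms.le)) h0 hm i him
    · have := ih (s - m) (by omega) (hp.drop hms.le) (fun j hj => hxp (m + j) (by omega))
        (by simpa using hm) (by simpa [Nat.add_sub_cancel' hms.le] using hs) (i - m) (by omega)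
      simpa [Nat.add_sub_cancel' hmi] using this

def IsWalkIn (G : SimpleGraph V) (Q : Set V) (p : ℕ → V) (s : ℕ) : Prop :=
  (∀ i ≤ s, p i ∈ Q) ∧ ∀ i < s, G.Adj (p i) (p (i + 1))

section IsWalkIn

variable {Q T : Set V} {p : ℕ → V} {s : ℕ}

theorem IsWalkIn.of_le (hp : IsWalkIn G Q p s) {r : ℕ} (hr : r ≤ s) : IsWalkIn G Q p r :=
  ⟨fun i hi => hp.1 i (hi.trans hr), fun i hi => hp.2 i (by omega)⟩

theorem IsWalkIn.shortcut (hp : IsWalkIn G Q p s) {i j : ℕ} (hij : i < j) (hjs : j ≤ s)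
    (hadj : G.Adj (p i) (p j)) :
    IsWalkIn G Q (fun k => if k ≤ i then p k else p (k + (j - i - 1))) (s - (j - i - 1)) := by
  refine ⟨fun k hk => ?_, fun k hk => ?_⟩
  · dsimp only
    split_ifs
    · exact hp.1 k (by omega)
    · exact hp.1 _ (by omega)
  · rcases lt_trichotomy k i with hki | rfl | hki
    · simpa [hki.le, Nat.succ_le_of_lt hki] using hp.2 k (by omega)
    · simpa [show k + 1 + (j - k - 1) = j by omega] using hadj
    · simpa [show ¬k ≤ i by omega, show ¬k + 1 ≤ i by omega,
        show k + 1 + (j - i - 1) = k + (j - i - 1) + 1 by omega] using hp.2 _ (by omega)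

theorem exists_isWalkIn_of_reachable {a b : Q} (h : (G.induce Q).Reachable a b) :
    ∃ s p, p 0 = (a : V) ∧ p s = (b : V) ∧ IsWalkIn G Q p s := by
  obtain ⟨w⟩ := h
  exact ⟨w.length, fun i => w.getVert i, by simp, by simp,
    fun i _ => (w.getVert i).2, fun i hi => w.adj_getVert_succ hi⟩

/-- A chord or a repeated vertex would give a shorter walk. -/
theorem IsWalkIn.isInducedPath_of_minimal (hp : IsWalkIn G Q p s) (hT : p s ∈ T)
    (hmin : ∀ m < s, ∀ q : ℕ → V, q 0 = p 0 → q m ∈ T → ¬IsWalkIn G Q q m) :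
    (∀ i < s, p i ∉ T) ∧ IsInducedPath G p s := by
  have hint : ∀ i < s, p i ∉ T := fun i hi hiT => hmin i hi p rfl hiT (hp.of_le hi.le)
  have hchord : ∀ i j, i + 2 ≤ j → j ≤ s → ¬G.Adj (p i) (p j) := by
    intro i j hij hjs hadj
    refine hmin (s - (j - i - 1)) (by omega) _ (by simp) ?_ (hp.shortcut (by omega) hjs hadj)
    simpa [show ¬s - (j - i - 1) ≤ i by omega, show s - (j - i - 1) + (j - i - 1) = s by omega]
      using hT
  have hinj : ∀ i j, i < j → j ≤ s → p i ≠ p j := by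
    intro i j hij hjs heq
    rcases Nat.lt_or_ge j s with hjs' | hsj
    · by_cases hj : j = i + 1
      · subst hj
        exact (hp.2 i (by omega)).ne heq
      · exact hchord i (j + 1) (by omega) hjs' (heq ▸ hp.2 j hjs')
    · exact hint i (by omega) (heq ▸ (show j = s by omega) ▸ hT)
  refine ⟨hint, fun i hi j hj heq => ?_, fun i hi j hj => ⟨fun hadj => ?_, ?_⟩⟩
  · by_contra hne
    rcases Nat.lt_or_gt_of_ne hne with h | h
    · exact hinj i j h hj heq
    · exact hinj j i h hi heq.symm
  · by_contra! hfar
    have hne : i ≠ j := fun h => hadj.ne (h ▸ rfl)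
    rcases Nat.lt_or_gt_of_ne hne with h | h
    · exact hchord i j (by omega) hj hadj
    · exact hchord j i (by omega) hi hadj.symm
  · rintro (rfl | rfl)
    · exact hp.2 i (by omega)
    · exact (hp.2 _ (by omega)).symm

theorem IsWalkIn.exists_isInducedPath (hp : IsWalkIn G Q p s) (hT : p s ∈ T) :
    ∃ r q, q 0 = p 0 ∧ q r ∈ T ∧ (∀ i < r, q i ∉ T) ∧ IsWalkIn G Q q r ∧ IsInducedPath G q r := by
  classical
  have hex : ∃ m q, q 0 = p 0 ∧ q m ∈ T ∧ IsWalkIn G Q q m := ⟨s, p, rfl, hT, hp⟩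
  obtain ⟨q, hq0, hqT, hq⟩ := Nat.find_spec hex
  have hmin : ∀ m < Nat.find hex, ∀ q' : ℕ → V, q' 0 = q 0 → q' m ∈ T → ¬IsWalkIn G Q q' m :=
    fun m hm q' hq'0 hq'T hq' => Nat.find_min hex hm ⟨q', hq'0.trans hq0, hq'T, hq'⟩
  obtain ⟨hint, hind⟩ := hq.isInducedPath_of_minimal hqT hmin
  exact ⟨_, q, hq0, hqT, hint, hq, hind⟩

end IsWalkIn

theorem IsChordal.exists_walk_adj_all (hG : IsChordal G) {X T : Set V}
    (hX : (G.induce Xᶜ).Connected) {u y : V} (hu : ∀ x ∈ X, G.Adj x u) (hy : y ∈ T)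
    (hT : ∀ z ∈ T, ∀ x ∈ X, G.Adj x z) :
    ∃ (s : ℕ) (p : ℕ → V), p 0 = u ∧ p s ∈ T ∧ (∀ i < s, p i ∉ T) ∧
      (∀ i < s, G.Adj (p i) (p (i + 1))) ∧ ∀ i ≤ s, ∀ x ∈ X, G.Adj x (p i) := by
  have hXc : ∀ w, (∀ x ∈ X, G.Adj x w) → w ∈ Xᶜ := fun w hw hwX => (hw w hwX).ne rfl
  obtain ⟨s, p, hp0, hps, hp⟩ := exists_isWalkIn_of_reachable
    (hX.preconnected ⟨u, hXc u hu⟩ ⟨y, hXc y (hT y hy)⟩)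
  obtain ⟨r, q, hq0, hqT, hint, hq, hind⟩ := hp.exists_isInducedPath (T := T) (hps ▸ hy)
  refine ⟨r, q, hq0.trans hp0, hqT, hint, hq.2, fun i hi x hx => ?_⟩
  exact hG.adj_of_adj_ends hind (fun j hj hjx => hq.1 j hj (hjx ▸ hx))
    (hq0 ▸ hp0 ▸ hu x hx) (hT _ hqT x hx) i hi

section TConnected

variable [Fintype V] {t : ℕ}

/-- Otherwise take `u ∉ K` with the most neighbours `X` in `K`: on the walk from `u` to `K \ X`
given by `IsChordal.exists_walk_adj_all`, the last vertex outside `K` has even more. -/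
theorem TConnected.exists_adj_all_of_isClique (hconn : TConnected G t) (hG : IsChordal G)
    {K : Finset V} (hK : G.IsClique (K : Set V)) (hKt : K.card < t) :
    ∃ w ∉ K, ∀ y ∈ K, G.Adj y w := by
  classical
  by_contra! hnone
  have hout : (Finset.univ \ K).Nonempty := by
    obtain ⟨w, -, hw⟩ := Finset.exists_mem_notMem_of_card_lt_card
      (hKt.trans (Finset.card_univ (α := V) ▸ hconn.1))
    exact ⟨w, Finset.mem_sdiff.2 ⟨Finset.mem_univ w, hw⟩⟩
  obtain ⟨u, hu, hmax⟩ :=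
    Finset.exists_max_image _ (fun w => (K.filter (G.Adj · w)).card) hout
  set X := K.filter (G.Adj · u)
  have hXK : X ⊆ K := Finset.filter_subset _ _
  obtain ⟨y, hyK, hyu⟩ := hnone u (Finset.mem_sdiff.1 hu).2
  obtain ⟨s, p, hp0, hpT, hint, hadj, hpX⟩ := hG.exists_walk_adj_all (X := (X : Set V))
    (T := (K : Set V) \ X)
    (hconn.2 _ (by rw [Set.ncard_coe_finset]; exact (Finset.card_le_card hXK).trans_lt hKt))
    (fun x hx => (Finset.mem_filter.1 hx).2) (y := y)
    ⟨hyK, fun h => hyu (Finset.mem_filter.1 h).2⟩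
    (fun z hz x hx => hK (hXK hx) hz.1 fun h => hz.2 (h ▸ hx))
  have hs : s ≠ 0 := by
    rintro rfl
    exact (Finset.mem_sdiff.1 hu).2 (hp0 ▸ hpT.1)
  have hw : p (s - 1) ∉ K := fun h =>
    hint (s - 1) (by omega) ⟨h, fun hX => (hpX (s - 1) (by omega) _ hX).ne rfl⟩
  have hsub : insert (p s) X ⊆ K.filter (G.Adj · (p (s - 1))) := by
    intro z hz
    rcases Finset.mem_insert.1 hz with rfl | hz
    · refine Finset.mem_filter.2 ⟨hpT.1, ?_⟩
      simpa [Nat.sub_add_cancel (Nat.one_le_iff_ne_zero.2 hs)] using (hadj (s - 1) (by omega)).symm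
    · exact Finset.mem_filter.2 ⟨hXK hz, hpX _ (by omega) z hz⟩
  have := (Finset.card_le_card hsub).trans (hmax _ (Finset.mem_sdiff.2 ⟨Finset.mem_univ _, hw⟩))
  rw [Finset.card_insert_of_notMem hpT.2] at this
  omega

theorem TConnected.exists_isNClique_superset [DecidableEq V] (hconn : TConnected G t)
    (hG : IsChordal G) {K : Finset V} (hK : G.IsClique (K : Set V)) {k : ℕ} (hKk : K.card ≤ k)
    (hkt : k ≤ t) : ∃ L, K ⊆ L ∧ G.IsNClique k L := by
  induction k, hKk using Nat.le_induction with
  | base => exact ⟨K, subset_rfl, hK, rfl⟩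
  | succ k _ ih =>
    obtain ⟨L, hKL, hL⟩ := ih (by omega)
    obtain ⟨w, -, hw⟩ :=
      hconn.exists_adj_all_of_isClique hG hL.isClique (by rw [hL.card_eq]; omega)
    exact ⟨insert w L, hKL.trans (Finset.subset_insert _ _), hL.insert fun y hy => (hw y hy).symm⟩

end TConnected

def CommonNbrClosed (G : SimpleGraph V) (t : ℕ) (P : Set V) : Prop :=
  ∀ K : Finset V, G.IsNClique t K → (K : Set V) ⊆ P → ∀ w, (∀ y ∈ K, G.Adj y w) → w ∈ P

def ExtendsToNCliqueIn (G : SimpleGraph V) (t : ℕ) (P : Set V) (I : Finset V) : Prop :=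
  ∃ K : Finset V, G.IsNClique t K ∧ (K : Set V) ⊆ P ∧ I ⊆ K

section CommonNbrClosed

variable {t : ℕ} {P : Set V}

theorem ExtendsToNCliqueIn.mono {I J : Finset V} (hI : ExtendsToNCliqueIn G t P I) (hJI : J ⊆ I) :
    ExtendsToNCliqueIn G t P J :=
  let ⟨K, hK, hKP, hIK⟩ := hI
  ⟨K, hK, hKP, hJI.trans hIK⟩

theorem CommonNbrClosed.extendsToNCliqueIn_insert_of_card_eq [DecidableEq V]
    (hP : CommonNbrClosed G t P) {I : Finset V} {a b : V} (hI : I.card + 1 = t)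
    (ha : ExtendsToNCliqueIn G t P (insert a I)) (haI : a ∉ I) (hab : G.Adj a b)
    (hb : ∀ x ∈ I, G.Adj x b) : ExtendsToNCliqueIn G t P (insert b I) := by
  obtain ⟨L, hL, hLP, haIL⟩ := ha
  obtain rfl : insert a I = L := Finset.eq_of_subset_of_card_le haIL
    (by rw [hL.card_eq, Finset.card_insert_of_notMem haI]; omega)
  have hbP : b ∈ P := hP _ hL hLP b (Finset.forall_mem_insert _ _ _ |>.2 ⟨hab, hb⟩)
  have hbI : b ∉ I := fun h => (hb b h).ne rfl
  refine ⟨insert b I, ⟨?_, by rw [Finset.card_insert_of_notMem hbI]; omega⟩, ?_, subset_rfl⟩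
  · rw [Finset.coe_insert]
    exact (hL.isClique.subset (by simp)).insert fun y hy _ => (hb y hy).symm
  · rw [Finset.coe_insert]
    exact Set.insert_subset hbP ((Finset.coe_subset.2 (Finset.subset_insert a I)).trans hLP)

/-- Carry a `t`-clique in `P` containing `I` along a walk from `K \ I` to `b` all of whose vertices
are adjacent to all of `I`; when `I.card + 1 < t`, each step is this statement for the larger set
`insert (p i) I`. -/
theorem TConnected.extendsToNCliqueIn_insert [Fintype V] [DecidableEq V] (hconn : TConnected G t)
    (hG : IsChordal G) (hP : CommonNbrClosed G t P) {I : Finset V} {b : V}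
    (hI : ExtendsToNCliqueIn G t P I) (hIt : I.card < t) (hb : ∀ x ∈ I, G.Adj x b) :
    ExtendsToNCliqueIn G t P (insert b I) := by
  obtain ⟨r, hr⟩ : ∃ r, t - I.card = r := ⟨_, rfl⟩
  induction r generalizing I b with
  | zero => omega
  | succ r ih =>
    obtain ⟨K, hK, hKP, hIK⟩ := hI
    obtain ⟨x, hxK, hxI⟩ :=
      Finset.exists_mem_notMem_of_card_lt_card (s := I) (t := K) (by rw [hK.card_eq]; exact hIt)
    obtain ⟨s, p, hp0, hpb, -, hadj, hpI⟩ := hG.exists_walk_adj_all (X := (I : Set V))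
      (T := {b}) (hconn.2 _ (by rwa [Set.ncard_coe_finset]))
      (fun y hy => hK.isClique (hIK hy) hxK fun h => hxI (h ▸ hy)) rfl
      (fun z hz => hz ▸ hb)
    have hnotI : ∀ i ≤ s, p i ∉ I := fun i hi h => (hpI i hi _ h).ne rfl
    have hpath : ∀ i ≤ s, ExtendsToNCliqueIn G t P (insert (p i) I) := by
      intro i hi
      induction i with
      | zero => exact ⟨K, hK, hKP, Finset.insert_subset (hp0 ▸ hxK) hIK⟩
      | succ i ihi =>
        have hJ := ihi (by omega)
        rcases (show I.card + 1 = t ∨ I.card + 1 < t by omega) with hcard | hcard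
        · exact hP.extendsToNCliqueIn_insert_of_card_eq hcard hJ (hnotI i (by omega))
            (hadj i (by omega)) (hpI (i + 1) hi)
        · have hJcard := Finset.card_insert_of_notMem (hnotI i (by omega))
          refine (ih hJ (by omega) ?_ (by omega)).mono
            (Finset.insert_subset_insert _ (Finset.subset_insert _ _))
          exact Finset.forall_mem_insert _ _ _ |>.2 ⟨hadj i (by omega), hpI (i + 1) hi⟩
    simpa [Set.mem_singleton_iff.1 hpb] using hpath s le_rfl

theorem TConnected.eq_univ_of_commonNbrClosed [Fintype V] (hconn : TConnected G t)
    (hG : IsChordal G) (ht : 0 < t) (hP : CommonNbrClosed G t P) {K : Finset V}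
    (hK : G.IsNClique t K) (hKP : (K : Set V) ⊆ P) : P = Set.univ := by
  classical
  refine Set.eq_univ_of_forall fun b => ?_
  obtain ⟨L, -, hLP, hbL⟩ := hconn.extendsToNCliqueIn_insert hG hP (b := b)
    ⟨K, hK, hKP, Finset.empty_subset _⟩ (by simpa) (by simp)
  exact hLP (hbL (Finset.mem_insert_self b ∅))

end CommonNbrClosed

section Activation

variable [Fintype V] {θ : V → ℤ} {S : Set V}

theorem subset_activationClosure : S ⊆ activationClosure G θ S :=
  fun _ hz => Set.mem_sInter.2 fun _ hA => hA.1 hz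

theorem activationClosed_activationClosure : activationClosed G θ (activationClosure G θ S) := by
  intro w hw
  refine Set.mem_sInter.2 fun A hA => hA.2 w (hw.trans ?_)
  have hsub : activationClosure G θ S ∩ G.neighborSet w ⊆ A ∩ G.neighborSet w :=
    Set.inter_subset_inter_left _ (Set.sInter_subset_of_mem hA)
  exact_mod_cast Set.ncard_le_ncard hsub (Set.toFinite _)

theorem activationClosed.mem_of_subset {A : Set V} (hA : activationClosed G θ A) {B : Finset V}
    {w : V} (hBA : (B : Set V) ⊆ A) (hB : ∀ y ∈ B, G.Adj y w) (hθ : θ w ≤ B.card) : w ∈ A := by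
  refine hA w (hθ.trans ?_)
  have hsub : (B : Set V) ⊆ A ∩ G.neighborSet w := fun y hy => ⟨hBA hy, (hB y hy).symm⟩
  exact_mod_cast Set.ncard_coe_finset B ▸ Set.ncard_le_ncard hsub (Set.toFinite _)

theorem minSeed_le_ncard (h : activationClosure G θ S = Set.univ) : minSeed G θ ≤ S.ncard :=
  Nat.sInf_le ⟨S, h, rfl⟩

end Activation

end

theorem minSeed_lt_of_small_threshold {V : Type*} [Fintype V] (G : SimpleGraph V)
    (t : ℕ) (ht : 2 ≤ t) (hconn : TConnected G t) (hchordal : IsChordal G)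
    (θ : V → ℤ) (hθ : ∀ x, θ x ≤ (t : ℤ)) (v : V) (hv : θ v < (t : ℤ)) :
    minSeed G θ < t := by
  classical
  obtain ⟨K, hvK, hK⟩ : ∃ K : Finset V, v ∈ K ∧ G.IsNClique t K := by
    obtain ⟨K, hvK, hK⟩ := hconn.exists_isNClique_superset hchordal (K := {v}) (by simp)
      (by simp; omega) le_rfl
    exact ⟨K, hvK (Finset.mem_singleton_self v), hK⟩
  set S : Set V := ↑(K.erase v)
  have hS : S.ncard = t - 1 := by
    rw [Set.ncard_coe_finset, Finset.card_erase_of_mem hvK, hK.card_eq]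
  have hclosed := activationClosed_activationClosure (G := G) (θ := θ) (S := S)
  have hvP : v ∈ activationClosure G θ S :=
    hclosed.mem_of_subset subset_activationClosure
      (fun y hy => hK.isClique (Finset.mem_of_mem_erase hy) hvK (Finset.ne_of_mem_erase hy))
      (by rw [Finset.card_erase_of_mem hvK, hK.card_eq]; omega)
  have hKP : (K : Set V) ⊆ activationClosure G θ S := by
    rw [← Finset.insert_erase hvK, Finset.coe_insert]
    exact Set.insert_subset hvP subset_activationClosure
  have hP : CommonNbrClosed G t (activationClosure G θ S) :=
    fun L hL hLP w hw => hclosed.mem_of_subset hLP hw (hL.card_eq ▸ hθ w)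
  calc minSeed G θ ≤ S.ncard :=
        minSeed_le_ncard (hconn.eq_univ_of_commonNbrClosed hchordal (by omega) hP hK hKP)
    _ < t := by omega
end

section
/- Let G be a 2-connected chordal graph with thresholds θ(v) ≤ 2 for every vertex v. Then min-seed(G, θ) = 2 if and only if θ(v) = 2 for every vertex v of G. -/
namespace TSS

variable {V : Type*}

/-- Walks recorded as ℕ-indexed functions staying inside a set `A`. -/
def ReachIn (G : SimpleGraph V) (A : Set V) (x y : V) : Prop :=
  ∃ (n : ℕ) (f : ℕ → V), f 0 = x ∧ f n = y ∧ (∀ i ≤ n, f i ∈ A) ∧ ∀ i < n, G.Adj (f i) (f (i+1))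

lemma reachIn_refl {G : SimpleGraph V} {A : Set V} {x : V} (hx : x ∈ A) : ReachIn G A x x :=
  ⟨0, fun _ => x, rfl, rfl, fun _ _ => hx, fun i h => absurd h (Nat.not_lt_zero i)⟩

lemma reachIn_step {G : SimpleGraph V} {A : Set V} {x y z : V}
    (h : ReachIn G A x y) (hyz : G.Adj y z) (hz : z ∈ A) : ReachIn G A x z := by
  obtain ⟨n, f, h0, hn, hmem, hadj⟩ := h
  refine ⟨n+1, fun t => if t ≤ n then f t else z, ?_, ?_, ?_, ?_⟩
  · simp [h0]
  · simp
  · intro i hi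
    by_cases h' : i ≤ n
    · simpa [h'] using hmem i h'
    · simpa [h'] using hz
  · intro i hi
    rcases lt_or_eq_of_le (Nat.lt_succ_iff.1 hi) with h' | h'
    · simp only [if_pos (le_of_lt h'), if_pos (Nat.succ_le_of_lt h')]
      exact hadj i h'
    · subst h'
      simp only [le_refl, if_pos, if_neg (by omega : ¬ i + 1 ≤ i)]
      rw [hn]; exact hyz

lemma reachIn_symm {G : SimpleGraph V} {A : Set V} {x y : V}
    (h : ReachIn G A x y) : ReachIn G A y x := by
  obtain ⟨n, f, h0, hn, hmem, hadj⟩ := h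
  refine ⟨n, fun t => f (n - t), by simp [hn], by simp [h0], fun i _ => hmem _ (by omega), ?_⟩
  intro i hi
  have h1 : n - (i+1) + 1 = n - i := by omega
  have h2 := hadj (n - (i+1)) (by omega)
  rw [h1] at h2
  exact h2.symm

lemma reachIn_trans {G : SimpleGraph V} {A : Set V} {x y z : V}
    (h1 : ReachIn G A x y) (h2 : ReachIn G A y z) : ReachIn G A x z := by
  obtain ⟨n, f, hf0, hfn, hfmem, hfadj⟩ := h1
  obtain ⟨k, g, hg0, hgk, hgmem, hgadj⟩ := h2
  have key : ∀ t, n ≤ t → (if t ≤ n then f t else g (t - n)) = g (t - n) := by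
    intro t ht
    by_cases h' : t ≤ n
    · have : t = n := le_antisymm h' ht
      subst this
      simp [hfn, ← hg0]
    · simp [h']
  refine ⟨n + k, fun t => if t ≤ n then f t else g (t - n), ?_, ?_, ?_, ?_⟩
  · simp [hf0]
  · have := key (n + k) (by omega)
    simp only at this ⊢
    rw [this, show n + k - n = k from by omega, hgk]
  · intro i hi
    by_cases h' : i ≤ n
    · simpa [h'] using hfmem i h'
    · simpa [h'] using hgmem (i - n) (by omega)
  · intro i hi
    by_cases h' : i + 1 ≤ n
    · simp only [if_pos (by omega : i ≤ n), if_pos h']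
      exact hfadj i (by omega)
    · by_cases h'' : i < n
      · omega
      · have e1 := key i (by omega)
        have e2 := key (i+1) (by omega)
        simp only at e1 e2 ⊢
        rw [e1, e2, show i + 1 - n = (i - n) + 1 from by omega]
        exact hgadj (i - n) (by omega)

lemma reach_all {G : SimpleGraph V} {A : Set V} {u : V}
    (h : ∀ y ∈ A, ReachIn G A u y) : ∀ x ∈ A, ∀ y ∈ A, ReachIn G A x y :=
  fun x hx y hy => reachIn_trans (reachIn_symm (h x hx)) (h y hy)

/-- Extract a ℕ-indexed walk from reachability in an induced subgraph. -/
lemma reachIn_of_induce {G : SimpleGraph V} {s : Set V} {x y : s}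
    (h : (G.induce s).Reachable x y) : ReachIn G s x y := by
  obtain ⟨p⟩ := h
  induction p with
  | nil => exact reachIn_refl (Subtype.mem _)
  | @cons a c y hadj p ih =>
      have hac : G.Adj ↑a ↑c := hadj
      exact reachIn_trans (reachIn_step (reachIn_refl a.2) hac c.2) ih

lemma subset_activationClosure [Fintype V] (G : SimpleGraph V) (θ : V → ℤ) (S : Set V) :
    S ⊆ activationClosure G θ S := fun x hx => Set.mem_sInter.2 fun _ hA => hA.1 hx

lemma activationClosure_subset [Fintype V] {G : SimpleGraph V} {θ : V → ℤ} {S A : Set V}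
    (h1 : S ⊆ A) (h2 : activationClosed G θ A) : activationClosure G θ S ⊆ A :=
  Set.sInter_subset_of_mem ⟨h1, h2⟩

lemma activationClosed_closure [Fintype V] (G : SimpleGraph V) (θ : V → ℤ) (S : Set V) :
    activationClosed G θ (activationClosure G θ S) := by
  intro v hv
  refine Set.mem_sInter.2 fun A hA => hA.2 v (le_trans hv ?_)
  have hsub : activationClosure G θ S ∩ G.neighborSet v ⊆ A ∩ G.neighborSet v :=
    Set.inter_subset_inter_left _ (activationClosure_subset hA.1 hA.2)
  exact_mod_cast Set.ncard_le_ncard hsub (Set.toFinite _)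

lemma activationClosure_mono_theta [Fintype V] {G : SimpleGraph V} {θ θ' : V → ℤ}
    (h : ∀ v, θ v ≤ θ' v) (S : Set V) :
    activationClosure G θ' S ⊆ activationClosure G θ S :=
  activationClosure_subset (subset_activationClosure G θ S)
    (fun v hv => activationClosed_closure G θ S v (le_trans (h v) hv))

lemma mem_of_two_nbrs [Fintype V] {G : SimpleGraph V} {θ : V → ℤ} {A : Set V}
    (hA : activationClosed G θ A) (hθ2 : ∀ v, θ v ≤ 2) {b x y : V}
    (hx : x ∈ A) (hy : y ∈ A) (hxb : G.Adj b x) (hyb : G.Adj b y) (hxy : x ≠ y) :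
    b ∈ A := by
  apply hA
  refine le_trans (hθ2 b) ?_
  have h2 : ({x, y} : Set V) ⊆ A ∩ G.neighborSet b := by
    rintro z (rfl | rfl)
    · exact ⟨hx, hxb⟩
    · exact ⟨hy, hyb⟩
  calc (2:ℤ) = (({x,y} : Set V).ncard : ℤ) := by rw [Set.ncard_pair hxy]; simp
    _ ≤ _ := by exact_mod_cast Set.ncard_le_ncard h2 (Set.toFinite _)

lemma splice_walk {G : SimpleGraph V} {f : ℕ → V} {n i d : ℕ}
    (hw : ∀ t, t < n → G.Adj (f t) (f (t+1))) (hin : i + d + 1 ≤ n)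
    (hseam : G.Adj (f i) (f (i + d + 1))) :
    ∀ t, t < n - d → G.Adj ((fun t => if t ≤ i then f t else f (t + d)) t)
                       ((fun t => if t ≤ i then f t else f (t + d)) (t+1)) := by
  intro t ht
  simp only
  rcases lt_trichotomy t i with h | h | h
  · rw [if_pos (by omega), if_pos (by omega)]
    exact hw t (by omega)
  · subst h
    rw [if_pos (by omega), if_neg (by omega), show t + 1 + d = t + d + 1 from by omega]
    exact hseam
  · rw [if_neg (by omega), if_neg (by omega), show t + 1 + d = (t + d) + 1 from by omega]
    exact hw (t+d) (by omega)

lemma embed_cycle {G : SimpleGraph V} {c : ℕ → V} {L : ℕ} (hL : 4 ≤ L)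
    (hinj : ∀ i, i < L → ∀ j, j < L → c i = c j → i = j)
    (hadj : ∀ t, t + 1 < L → G.Adj (c t) (c (t+1)))
    (hlast : G.Adj (c (L-1)) (c 0))
    (hchord : ∀ i j, i + 1 < j → j < L → ¬(i = 0 ∧ j = L - 1) → ¬ G.Adj (c i) (c j)) :
    Nonempty (SimpleGraph.cycleGraph L ↪g G) := by
  obtain ⟨n, rfl⟩ : ∃ n, L = n + 2 := ⟨L - 2, by omega⟩
  have key : ∀ a b : ℕ, a < b → b < n + 2 →
      (G.Adj (c a) (c b) ↔ (b = a + 1 ∨ (a = 0 ∧ b = n + 1))) := by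
    intro a b hab hb
    constructor
    · intro h
      by_contra hcon
      push_neg at hcon
      have h1 : b ≠ a + 1 := hcon.1
      have h2 : ¬(a = 0 ∧ b = n + 1) := by
        intro ⟨ha0, hb1⟩; exact hcon.2 ha0 hb1
      exact hchord a b (by omega) (by omega) (by omega) h
    · rintro (rfl | ⟨rfl, rfl⟩)
      · exact hadj a hb
      · have : n + 2 - 1 = n + 1 := by omega
        rw [this] at hlast
        exact hlast.symm
  have hsucc : ∀ u v : Fin (n+2), (v - u = 1) ↔ (v.val = u.val + 1 ∨ (u.val = n + 1 ∧ v.val = 0)) := by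
    intro u v
    rw [sub_eq_iff_eq_add, add_comm 1 u, Fin.ext_iff, Fin.add_def, Fin.val_one]
    have hu := u.isLt
    have hv := v.isLt
    simp only [Fin.val_mk]
    by_cases h : u.val + 1 < n + 2
    · rw [Nat.mod_eq_of_lt h]
      omega
    · have h2 : u.val + 1 = n + 2 := by omega
      rw [h2, Nat.mod_self]
      omega
  refine ⟨⟨⟨fun i => c i.val, fun i j hij => ?_⟩, @fun i j => ?_⟩⟩
  · exact Fin.ext (hinj i.val i.isLt j.val j.isLt hij)
  · show G.Adj (c i.val) (c j.val) ↔ _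
    rw [SimpleGraph.cycleGraph_adj, hsucc j i, hsucc i j]
    have hi := i.isLt; have hj := j.isLt
    rcases lt_trichotomy i.val j.val with h | h | h
    · rw [key i.val j.val h hj]; omega
    · constructor
      · intro hadj'
        exfalso
        have : i = j := Fin.ext h
        subst this
        exact G.irrefl hadj'
      · intro hr; exfalso; omega
    · rw [G.adj_comm, key j.val i.val h hi]; omega

def PathProp [Fintype V] (G : SimpleGraph V) (A : Set V) (n : ℕ) (f : ℕ → V) : Prop :=
  2 ≤ n ∧ f 0 ∈ A ∧ f n ∈ A ∧ f 0 ≠ f n ∧ (∀ i, i < n → G.Adj (f i) (f (i+1))) ∧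
    ∀ i, 0 < i → i < n → f i ∉ A

lemma core [Fintype V] {G : SimpleGraph V}
    (hconn : TConnected G 2) (hchordal : IsChordal G)
    {θ : V → ℤ} (hθ2 : ∀ v, θ v ≤ 2) {A : Set V}
    (hA : activationClosed G θ A)
    (hreach : ∀ x ∈ A, ∀ y ∈ A, ReachIn G A x y)
    {u w : V} (hu : u ∈ A) (hw : w ∈ A) (huw : G.Adj u w) :
    A = Set.univ := by
  classical
  by_contra hne
  obtain ⟨b₀, hb₀⟩ : ∃ b, b ∉ A := by
    by_contra h
    push_neg at h
    exact hne (Set.eq_univ_iff_forall.2 h)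
  have hGconn : (G.induce ((∅ : Set V)ᶜ)).Connected := hconn.2 ∅ (by simp)
  -- Step 1 : a crossing edge a–b with a ∈ A, b ∉ A
  obtain ⟨a, b, haA, hbA, hab⟩ : ∃ a b, a ∈ A ∧ b ∉ A ∧ G.Adj a b := by
    have hr := reachIn_of_induce (s := ((∅ : Set V)ᶜ))
        (hGconn.preconnected ⟨u, by simp⟩ ⟨b₀, by simp⟩)
    obtain ⟨n, f, hf0, hfn, _, hfadj⟩ := hr
    have hTne : (n : ℕ) ∈ {i | f i ∉ A} := by simpa [hfn] using hb₀
    set k := sInf {i | f i ∉ A} with hk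
    have hkT : f k ∉ A := Nat.sInf_mem ⟨n, hTne⟩
    have hk1 : k ≠ 0 := by
      intro h
      rw [h, hf0] at hkT
      exact hkT hu
    have hkn : k ≤ n := Nat.sInf_le hTne
    have hprev : f (k-1) ∈ A := by
      have h' : k - 1 ∉ {i | f i ∉ A} := Nat.notMem_of_lt_sInf (by omega)
      simpa using h'
    refine ⟨f (k-1), f k, hprev, hkT, ?_⟩
    have h2 := hfadj (k-1) (by omega)
    rwa [show k - 1 + 1 = k from by omega] at h2
  -- Step 2 : an escape path from b back to A avoiding a, giving a PathProp path
  have hL : ∃ n f, PathProp G A n f := by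
    set a' := if a = u then w else u with ha'
    have ha'A : a' ∈ A := by
      rw [ha']; split <;> assumption
    have ha'ne : a' ≠ a := by
      rw [ha']; split
      · rename_i h; rw [h]; exact fun hh => huw.ne hh.symm
      · rename_i h; exact fun hh => h hh.symm
    have hacon : (G.induce (({a} : Set V)ᶜ)).Connected :=
      hconn.2 {a} (by simp)
    have hr := reachIn_of_induce (s := (({a} : Set V)ᶜ))
        (hacon.preconnected ⟨b, by simp; exact fun h => hbA (h ▸ haA)⟩ ⟨a', by simpa using ha'ne⟩)
    obtain ⟨n, f, hf0, hfn, hfmem, hfadj⟩ := hr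
    have hTne : (n : ℕ) ∈ {i | f i ∈ A ∧ i ≤ n} := by
      simp only [Set.mem_setOf_eq]
      exact ⟨by rw [hfn]; exact ha'A, le_rfl⟩
    set k := sInf {i | f i ∈ A ∧ i ≤ n} with hk
    have hkT : f k ∈ A ∧ k ≤ n := Nat.sInf_mem ⟨n, hTne⟩
    have hk1 : k ≠ 0 := by
      intro h
      rw [h, hf0] at hkT
      exact hbA hkT.1
    have hprevnA : ∀ i, i < k → f i ∉ A := by
      intro i hik hiA
      exact Nat.notMem_of_lt_sInf (s := {i | f i ∈ A ∧ i ≤ n}) hik ⟨hiA, by omega⟩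
    refine ⟨k + 1, fun t => if t = 0 then a else f (t - 1), ?_, ?_, ?_, ?_, ?_, ?_⟩
    · omega
    · simpa using haA
    · simpa using hkT.1
    · simp only [if_pos rfl, if_neg (by omega : ¬ k + 1 = 0)]
      rw [show k + 1 - 1 = k from by omega]
      have := hfmem k hkT.2
      intro hcon
      exact this (by rw [← hcon]; rfl)
    · intro i hi
      rcases Nat.eq_zero_or_pos i with rfl | hipos
      · simp only [if_pos rfl, if_neg (by omega : ¬ (0:ℕ) + 1 = 0)]
        simpa [hf0] using hab
      · simp only [if_neg (by omega : ¬ i = 0), if_neg (by omega : ¬ i + 1 = 0)]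
        have h2 := hfadj (i-1) (by omega)
        rw [show i - 1 + 1 = i from by omega] at h2
        exact h2
    · intro i hipos hik
      simp only [if_neg (by omega : ¬ i = 0)]
      exact hprevnA (i-1) (by omega)
  -- Step 3 : minimal such path
  set N := sInf {n | ∃ f, PathProp G A n f} with hN
  have hNmem : ∃ f, PathProp G A N f := by
    have := Nat.sInf_mem (s := {n | ∃ f, PathProp G A n f}) (by obtain ⟨n, f, h⟩ := hL; exact ⟨n, f, h⟩)
    exact this
  obtain ⟨f, hN2, hf0, hfN, hfne, hfadj, hfint⟩ := hNmem
  have hNmin : ∀ n', n' < N → ¬ ∃ g, PathProp G A n' g :=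
    fun n' h => Nat.notMem_of_lt_sInf h
  -- the splice workhorse for P
  have hsplice : ∀ i d, 0 < d → i + d + 1 ≤ N → (0 < i ∨ i + d + 1 < N) →
      G.Adj (f i) (f (i+d+1)) → False := by
    intro i d hd hin hside hseam
    apply hNmin (N - d) (by omega)
    refine ⟨fun t => if t ≤ i then f t else f (t + d), ?_, ?_, ?_, ?_, ?_, ?_⟩
    · omega
    · simpa using hf0
    · simp only [if_neg (by omega : ¬ N - d ≤ i)]
      rw [show N - d + d = N from by omega]
      exact hfN
    · simp only [if_pos (Nat.zero_le i), if_neg (by omega : ¬ N - d ≤ i)]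
      rw [show N - d + d = N from by omega]
      exact hfne
    · exact splice_walk hfadj hin hseam
    · intro t ht htN
      by_cases h' : t ≤ i
      · simp only [if_pos h']
        exact hfint t ht (by omega)
      · simp only [if_neg h']
        exact hfint (t + d) (by omega) (by omega)
  have hN3 : 3 ≤ N := by
    by_contra h
    have hNeq : N = 2 := by omega
    have h1 : f 1 ∉ A := hfint 1 (by omega) (by omega)
    apply h1
    refine mem_of_two_nbrs hA hθ2 hf0 (show f 2 ∈ A from hNeq ▸ hfN)
      ((hfadj 0 (by omega)).symm) (hfadj 1 (by omega)) ?_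
    rw [← hNeq]; exact hfne
  have hinjP : ∀ i j, i < j → j ≤ N → f i ≠ f j := by
    intro i j hij hjN heq
    rcases Nat.eq_zero_or_pos i with rfl | hi
    · rcases eq_or_lt_of_le hjN with rfl | hjN'
      · exact hfne heq
      · exact hfint j hij hjN' (heq ▸ hf0)
    · rcases eq_or_lt_of_le hjN with rfl | hjN'
      · exact hfint i hi hij (heq.symm ▸ hfN)
      · refine hsplice i (j - i) (by omega) (by omega) (Or.inl hi) ?_
        rw [show i + (j-i) + 1 = j + 1 from by omega, heq]
        exact hfadj j hjN'
  have hchordP : ∀ i j, i + 1 < j → j ≤ N → ¬(i = 0 ∧ j = N) → ¬ G.Adj (f i) (f j) := by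
    intro i j h1 h2 h3 hadj
    refine hsplice i (j - i - 1) (by omega) (by omega) (by omega) ?_
    rwa [show i + (j-i-1) + 1 = j from by omega]
  -- Step 4 : minimal walk inside A from f 0 to f N
  have hMex : ReachIn G A (f 0) (f N) := hreach (f 0) hf0 (f N) hfN
  set M : Set ℕ := {mm | ∃ q : ℕ → V, q 0 = f 0 ∧ q mm = f N ∧ (∀ i ≤ mm, q i ∈ A) ∧
      ∀ i < mm, G.Adj (q i) (q (i+1))} with hM
  have hMne : M.Nonempty := by
    obtain ⟨mm, q, h1, h2, h3, h4⟩ := hMex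
    exact ⟨mm, q, h1, h2, h3, h4⟩
  set m := sInf M with hm
  obtain ⟨q, hq0, hqm, hqmem, hqadj⟩ := Nat.sInf_mem hMne
  rw [← hm] at hqm hqmem hqadj
  have hMmin : ∀ m', m' < m → ¬ ∃ q : ℕ → V, q 0 = f 0 ∧ q m' = f N ∧ (∀ i ≤ m', q i ∈ A) ∧
      ∀ i < m', G.Adj (q i) (q (i+1)) := fun m' h => Nat.notMem_of_lt_sInf h
  have hm1 : 1 ≤ m := by
    rcases Nat.eq_zero_or_pos m with h | h
    · rw [h] at hqm
      exact absurd (hq0.symm.trans hqm) hfne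
    · exact h
  have hspliceQ : ∀ i d, 0 < d → i + d + 1 ≤ m → G.Adj (q i) (q (i+d+1)) → False := by
    intro i d hd hin hseam
    apply hMmin (m - d) (by omega)
    refine ⟨fun t => if t ≤ i then q t else q (t + d), ?_, ?_, ?_, ?_⟩
    · simpa using hq0
    · simp only [if_neg (by omega : ¬ m - d ≤ i)]
      rw [show m - d + d = m from by omega]
      exact hqm
    · intro t ht
      by_cases h' : t ≤ i
      · simp only [if_pos h']
        exact hqmem t (by omega)
      · simp only [if_neg h']
        exact hqmem (t + d) (by omega)
    · exact splice_walk hqadj hin hseam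
  have hchordQ : ∀ i j, i + 1 < j → j ≤ m → ¬ G.Adj (q i) (q j) := by
    intro i j h1 h2 hadj
    refine hspliceQ i (j - i - 1) (by omega) (by omega) ?_
    rwa [show i + (j-i-1) + 1 = j from by omega]
  have hinjQ : ∀ i j, i < j → j ≤ m → q i ≠ q j := by
    intro i j hij hjm heq
    rcases eq_or_lt_of_le hjm with rfl | hjm'
    · rcases Nat.eq_zero_or_pos i with rfl | hi
      · exact absurd (hq0.symm.trans (heq.trans hqm)) hfne
      · refine hMmin i hij ⟨q, hq0, heq.trans hqm, ?_, ?_⟩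
        · exact fun t ht => hqmem t (le_trans ht (le_of_lt hij))
        · exact fun t ht => hqadj t (lt_trans ht hij)
    · refine hspliceQ i (j - i) (by omega) (by omega) ?_
      rw [show i + (j-i) + 1 = j + 1 from by omega, heq]
      exact hqadj j hjm'
  -- Step 5 : mixed chords between interiors are impossible
  have hmix : ∀ t s, 0 < t → t < N → 0 < s → s < m → ¬ G.Adj (f t) (q s) := by
    intro t s ht htN hs hsm hadj
    have hqsA : q s ∈ A := hqmem s (by omega)
    have hqs0 : f 0 ≠ q s := by
      have h' := hinjQ 0 s hs (by omega)
      rwa [hq0] at h'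
    by_cases htN2 : t + 1 < N
    · apply hNmin (t+1) (by omega)
      refine ⟨fun r => if r ≤ t then f r else q s, by omega, ?_, ?_, ?_, ?_, ?_⟩
      · simpa using hf0
      · simp only [if_neg (by omega : ¬ t + 1 ≤ t)]
        exact hqsA
      · simp only [if_pos (Nat.zero_le t), if_neg (by omega : ¬ t + 1 ≤ t)]
        exact hqs0
      · intro r hr
        rcases Nat.lt_succ_iff_lt_or_eq.1 hr with h' | rfl
        · simp only [if_pos (by omega : r ≤ t), if_pos (by omega : r + 1 ≤ t)]
          exact hfadj r (by omega)
        · simp only [if_pos (le_refl r), if_neg (by omega : ¬ r + 1 ≤ r)]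
          exact hadj
      · intro r hr hrt1
        simp only [if_pos (by omega : r ≤ t)]
        exact hfint r hr (by omega)
    · have hfNqs : f N ≠ q s := by
        have h' := hinjQ s m hsm le_rfl
        rw [hqm] at h'
        exact fun hh => h' hh.symm
      apply hfint t ht htN
      refine mem_of_two_nbrs hA hθ2 hfN hqsA ?_ hadj hfNqs
      have h2 := hfadj t htN
      rwa [show t + 1 = N from by omega] at h2
  -- Step 6 : assemble a chordless cycle of length N + m
  set c : ℕ → V := fun t => if t ≤ N then f t else q (N + m - t) with hc
  have hcP : ∀ t, t ≤ N → c t = f t := fun t ht => if_pos ht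
  have hcQ : ∀ t, N < t → c t = q (N + m - t) := fun t ht => if_neg (by omega)
  have hcinj : ∀ i, i < N + m → ∀ j, j < N + m → c i = c j → i = j := by
    suffices hcl : ∀ i j, i < j → j < N + m → c i ≠ c j by
      intro i hi j hj heq
      rcases lt_trichotomy i j with h | h | h
      · exact absurd heq (hcl i j h hj)
      · exact h
      · exact absurd heq.symm (hcl j i h hi)
    intro i j hij hj heq
    by_cases hjN : j ≤ N
    · rw [hcP i (by omega), hcP j hjN] at heq
      exact hinjP i j hij hjN heq
    · rw [hcQ j (by omega)] at heq
      by_cases hiN : i ≤ N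
      · rw [hcP i hiN] at heq
        rcases Nat.eq_zero_or_pos i with rfl | hi
        · refine hinjQ 0 (N+m-j) (by omega) (by omega) ?_
          rw [hq0]; exact heq
        · rcases eq_or_lt_of_le hiN with rfl | hiN'
          · refine hinjQ (N+m-j) m (by omega) le_rfl ?_
            rw [hqm]; exact heq.symm
          · refine hfint i hi hiN' ?_
            rw [heq]; exact hqmem (N+m-j) (by omega)
      · rw [hcQ i (by omega)] at heq
        exact hinjQ (N+m-j) (N+m-i) (by omega) (by omega) heq.symm
  have hcadj : ∀ t, t + 1 < N + m → G.Adj (c t) (c (t+1)) := by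
    intro t ht
    by_cases h1 : t + 1 ≤ N
    · rw [hcP t (by omega), hcP (t+1) h1]
      exact hfadj t (by omega)
    · by_cases h2 : t ≤ N
      · have hteq : t = N := by omega
        subst hteq
        rw [hcP N le_rfl, hcQ (N+1) (by omega), show N + m - (N+1) = m - 1 from by omega, ← hqm]
        have h3 := hqadj (m-1) (by omega)
        rw [show m - 1 + 1 = m from by omega] at h3
        exact h3.symm
      · rw [hcQ t (by omega), hcQ (t+1) (by omega)]
        have h3 := hqadj (N + m - (t+1)) (by omega)
        rw [show N + m - (t+1) + 1 = N + m - t from by omega] at h3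
        exact h3.symm
  have hclast : G.Adj (c (N + m - 1)) (c 0) := by
    rw [hcP 0 (Nat.zero_le N)]
    by_cases hm2 : 2 ≤ m
    · rw [hcQ (N+m-1) (by omega), show N + m - (N + m - 1) = 1 from by omega, ← hq0]
      exact (hqadj 0 (by omega)).symm
    · have hm1' : m = 1 := by omega
      rw [hcP (N + m - 1) (by omega), show N + m - 1 = N from by omega]
      have h3 := hqadj 0 (by omega)
      rw [hq0, show (0:ℕ) + 1 = m from by omega, hqm] at h3
      exact h3.symm
  have hcchord : ∀ i j, i + 1 < j → j < N + m → ¬(i = 0 ∧ j = N + m - 1) → ¬ G.Adj (c i) (c j) := by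
    intro i j hij hj hside hadj
    by_cases hjN : j ≤ N
    · rw [hcP i (by omega), hcP j hjN] at hadj
      by_cases h0N : i = 0 ∧ j = N
      · obtain ⟨rfl, rfl⟩ := h0N
        by_cases hm2 : 2 ≤ m
        · refine hchordQ 0 m (by omega) le_rfl ?_
          rw [hq0, hqm]; exact hadj
        · exact hside ⟨rfl, by omega⟩
      · exact hchordP i j hij hjN h0N hadj
    · by_cases hiN : i ≤ N
      · rw [hcQ j (by omega), hcP i hiN] at hadj
        rcases Nat.eq_zero_or_pos i with rfl | hi
        · have hjne : j ≠ N + m - 1 := fun h => hside ⟨rfl, h⟩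
          refine hchordQ 0 (N+m-j) (by omega) (by omega) ?_
          rw [hq0]; exact hadj
        · rcases eq_or_lt_of_le hiN with rfl | hiN'
          · refine hchordQ (N+m-j) m (by omega) le_rfl ?_
            rw [hqm]; exact hadj.symm
          · exact hmix i (N+m-j) hi hiN' (by omega) (by omega) hadj
      · rw [hcQ i (by omega), hcQ j (by omega)] at hadj
        exact hchordQ (N+m-j) (N+m-i) (by omega) (by omega) hadj.symm
  have h4 : 4 ≤ N + m := by omega
  obtain ⟨emb⟩ := embed_cycle h4 hcinj hcadj hclast hcchord
  exact (hchordal (N+m) h4).false emb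

lemma reach_in_closure [Fintype V] {G : SimpleGraph V} {θ : V → ℤ}
    (hθ1 : ∀ v, 1 ≤ θ v) {S : Set V} {u : V} (hu : u ∈ S)
    (hS : ∀ x ∈ S, ReachIn G (activationClosure G θ S) u x) :
    ∀ y ∈ activationClosure G θ S, ReachIn G (activationClosure G θ S) u y := by
  set A := activationClosure G θ S with hA
  have hsub : A ⊆ {y | y ∈ A ∧ ReachIn G A u y} := by
    apply activationClosure_subset
    · intro x hx
      exact ⟨subset_activationClosure G θ S hx, hS x hx⟩
    · intro v hv
      have hmono : (({y | y ∈ A ∧ ReachIn G A u y} : Set V) ∩ G.neighborSet v).ncard ≤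
          (A ∩ G.neighborSet v).ncard :=
        Set.ncard_le_ncard (Set.inter_subset_inter_left _ (fun y hy => hy.1)) (Set.toFinite _)
      have hvA : v ∈ A := activationClosed_closure G θ S v (le_trans hv (by exact_mod_cast hmono))
      have hpos : (({y | y ∈ A ∧ ReachIn G A u y} : Set V) ∩ G.neighborSet v).ncard ≠ 0 := by
        have h1 : (1:ℤ) ≤ ((({y | y ∈ A ∧ ReachIn G A u y} : Set V) ∩ G.neighborSet v).ncard : ℤ) :=
          le_trans (hθ1 v) hv
        omega
      obtain ⟨x, hx⟩ := Set.nonempty_of_ncard_ne_zero hpos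
      exact ⟨hvA, reachIn_step hx.1.2 hx.2.symm hvA⟩
  exact fun y hy => (hsub hy).2

lemma exists_nbr [Fintype V] {G : SimpleGraph V} (hconn : TConnected G 2) (v : V) :
    ∃ x, G.Adj v x := by
  obtain ⟨y, hy⟩ := Fintype.exists_ne_of_one_lt_card (by have := hconn.1; omega) v
  have hGconn : (G.induce ((∅ : Set V)ᶜ)).Connected := hconn.2 ∅ (by simp)
  have hr := reachIn_of_induce (s := ((∅ : Set V)ᶜ))
      (hGconn.preconnected ⟨v, by simp⟩ ⟨y, by simp⟩)
  obtain ⟨n, f, hf0, hfn, _, hfadj⟩ := hr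
  have hn : n ≠ 0 := by
    intro h
    rw [h] at hfn
    exact hy (by simpa using hfn.symm.trans hf0)
  have h2 := hfadj 0 (by omega)
  rw [hf0] at h2
  exact ⟨f 1, h2⟩

end TSS

theorem minSeed_two_iff {V : Type*} [Fintype V] (G : SimpleGraph V)
    (hconn : TConnected G 2) (hchordal : IsChordal G)
    (θ : V → ℤ) (hθ : ∀ v, θ v ≤ 2) :
    minSeed G θ = 2 ↔ ∀ v, θ v = 2 := by
  classical
  have hcard : 2 < Fintype.card V := hconn.1
  constructor
  · intro hms
    by_contra hno
    push_neg at hno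
    obtain ⟨v, hv⟩ := hno
    obtain ⟨x, hvx⟩ := TSS.exists_nbr hconn v
    set θ' : V → ℤ := fun z => if z = v then 1 else 2 with hθ'
    have hθ'2 : ∀ z, θ' z ≤ 2 := by
      intro z; rw [hθ']; dsimp only; split <;> omega
    have hθ'1 : ∀ z, 1 ≤ θ' z := by
      intro z; rw [hθ']; dsimp only; split <;> omega
    have hθθ' : ∀ z, θ z ≤ θ' z := by
      intro z; rw [hθ']; dsimp only; split
      · rename_i h; subst h; have h1 := hθ z; omega
      · exact hθ z
    set A := activationClosure G θ' {x} with hAdef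
    have hxA : x ∈ A := TSS.subset_activationClosure G θ' {x} rfl
    have hvA : v ∈ A := by
      apply TSS.activationClosed_closure G θ' {x} v
      have hx' : x ∈ A ∩ G.neighborSet v := ⟨hxA, hvx⟩
      have hpos : 0 < (A ∩ G.neighborSet v).ncard :=
        (Set.ncard_pos (Set.toFinite _)).2 ⟨x, hx'⟩
      have hv1 : θ' v = 1 := by rw [hθ']; simp
      rw [hv1]
      exact_mod_cast hpos
    have hreach : ∀ p ∈ A, ∀ y ∈ A, TSS.ReachIn G A p y := by
      apply TSS.reach_all
      apply TSS.reach_in_closure hθ'1 (show x ∈ ({x} : Set V) from rfl)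
      intro z hz
      rw [Set.mem_singleton_iff] at hz
      subst hz
      exact TSS.reachIn_refl hxA
    have hAuniv : A = Set.univ :=
      TSS.core hconn hchordal hθ'2 (TSS.activationClosed_closure G θ' {x}) hreach hvA hxA hvx
    have h1 : (1:ℕ) ∈ {mm : ℕ | ∃ S : Set V, activationClosure G θ S = Set.univ ∧ S.ncard = mm} := by
      refine ⟨{x}, ?_, Set.ncard_singleton x⟩
      have hsub := TSS.activationClosure_mono_theta (G := G) hθθ' {x}
      rw [← hAdef, hAuniv] at hsub
      exact Set.eq_univ_of_univ_subset hsub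
    have hle : minSeed G θ ≤ 1 := Nat.sInf_le h1
    omega
  · intro hall
    have hθ1 : ∀ z, (1:ℤ) ≤ θ z := fun z => by rw [hall z]; norm_num
    obtain ⟨x0⟩ : Nonempty V := Fintype.card_pos_iff.1 (by omega)
    obtain ⟨y0, hxy⟩ := TSS.exists_nbr hconn x0
    set A := activationClosure G θ {x0, y0} with hAdef
    have hx0 : x0 ∈ A := TSS.subset_activationClosure _ _ _ (by simp)
    have hy0 : y0 ∈ A := TSS.subset_activationClosure _ _ _ (by simp)
    have hreach : ∀ p ∈ A, ∀ y ∈ A, TSS.ReachIn G A p y := by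
      apply TSS.reach_all
      apply TSS.reach_in_closure hθ1 (show x0 ∈ ({x0,y0} : Set V) by simp)
      intro z hz
      rcases hz with rfl | rfl
      · exact TSS.reachIn_refl hx0
      · exact TSS.reachIn_step (TSS.reachIn_refl hx0) hxy hy0
    have hAuniv : A = Set.univ :=
      TSS.core hconn hchordal hθ (TSS.activationClosed_closure G θ {x0, y0}) hreach hx0 hy0 hxy
    have h2mem : (2:ℕ) ∈ {mm : ℕ | ∃ S : Set V, activationClosure G θ S = Set.univ ∧ S.ncard = mm} :=
      ⟨{x0, y0}, by rw [← hAdef]; exact hAuniv, Set.ncard_pair hxy.ne⟩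
    have hlow : ∀ mm ∈ {mm : ℕ | ∃ S : Set V, activationClosure G θ S = Set.univ ∧ S.ncard = mm},
        2 ≤ mm := by
      rintro mm ⟨S, hSuniv, rfl⟩
      by_contra hlt
      push_neg at hlt
      have hclosed : activationClosed G θ S := by
        intro z hz
        exfalso
        have hle : (S ∩ G.neighborSet z).ncard ≤ S.ncard :=
          Set.ncard_le_ncard Set.inter_subset_left (Set.toFinite _)
        rw [hall z] at hz
        have h2 : (2:ℤ) ≤ (S.ncard : ℤ) := le_trans hz (by exact_mod_cast hle)
        omega
      have hsub : activationClosure G θ S ⊆ S := TSS.activationClosure_subset subset_rfl hclosed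
      rw [hSuniv] at hsub
      have hSU : S = Set.univ := Set.eq_univ_of_univ_subset hsub
      rw [hSU, Set.ncard_univ, Nat.card_eq_fintype_card] at hlt
      omega
    exact le_antisymm (Nat.sInf_le h2mem) (le_csInf ⟨2, h2mem⟩ hlow)
end

section
/- Let G = G₁ ⊕_v G₂ be the vertex-sum at cut-vertex v of graphs G₁ and G₂, with threshold function θ. Let θ₁ agree with θ on G₁ − v except θ₁(x) = θ(x) − 1 for x ∈ N_{G₁}(v). Let S₁ be an optimal target set for (G₁ − v, θ₁) maximizing |N_{G₁}(v) ∩ [S₁]_θ^{G₁}|, let θ₂ agree with θ on G₂ except θ₂(v) = θ(v) − |N_{G₁}(v) ∩ [S₁]_θ^{G₁}|, and let S₂ be an optimal target set for (G₂, θ₂). Then S₁ ∪ S₂ is an optimal target set for (G, θ); in particular min-seed(G, θ) = min-seed(G₁ − v, θ₁) + min-seed(G₂, θ₂). -/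
section Helpers
variable {V : Type*} [Fintype V] (G : SimpleGraph V) (θ : V → ℤ)

lemma ncard_cast_mono {s t : Set V} (h : s ⊆ t) : (s.ncard : ℤ) ≤ (t.ncard : ℤ) := by
  exact_mod_cast Set.ncard_le_ncard h t.toFinite

lemma subset_closureIn (W S : Set V) : S ⊆ activationClosureIn G θ W S := by
  intro x hx
  rw [activationClosureIn, Set.mem_sInter]
  exact fun A hA => hA.1 hx

lemma closureIn_subset {W S A : Set V} (h1 : S ⊆ A) (h2 : A ⊆ W)
    (h3 : activationClosedIn G θ W A) : activationClosureIn G θ W S ⊆ A :=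
  Set.sInter_subset_of_mem ⟨h1, h2, h3⟩

lemma closureIn_subset_base {W S : Set V} (hS : S ⊆ W) :
    activationClosureIn G θ W S ⊆ W :=
  closureIn_subset G θ hS subset_rfl (fun u hu _ => hu)

lemma closed_closureIn (W S : Set V) :
    activationClosedIn G θ W (activationClosureIn G θ W S) := by
  intro u hu hcnt
  rw [activationClosureIn, Set.mem_sInter]
  intro A hA
  have hsub : activationClosureIn G θ W S ⊆ A := Set.sInter_subset_of_mem hA
  exact hA.2.2 u hu (hcnt.trans (ncard_cast_mono (by
    exact Set.inter_subset_inter_left _ (Set.inter_subset_inter_left _ hsub))))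

lemma minSeedIn_eq {W S : Set V} (hS : S ⊆ W)
    (hfull : activationClosureIn G θ W S = W)
    (hopt : ∀ T ⊆ W, activationClosureIn G θ W T = W → S.ncard ≤ T.ncard) :
    minSeedIn G θ W = S.ncard := by
  apply le_antisymm
  · exact Nat.sInf_le ⟨S, hS, hfull, rfl⟩
  · refine le_csInf ⟨S.ncard, S, hS, hfull, rfl⟩ ?_
    rintro m ⟨T, hT, hTfull, rfl⟩
    exact hopt T hT hTfull

end Helpers

/-- Theorem 1 (vertex-sum): with `G = G₁ ⊕_v G₂`, `S₁` an optimal target set for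
`(G₁ - v, θ₁)` maximizing the influenced neighborhood of `v` in `G₁`, and `S₂`
an optimal target set for `(G₂, θ₂)`, the set `S₁ ∪ S₂` is an optimal target
set for `(G, θ)`, and min-seed adds up. -/
theorem vertex_sum_optimal_target {V : Type*} [Fintype V] (G : SimpleGraph V)
    [DecidableEq V] [DecidableRel G.Adj]
    (v : V) (V₁ V₂ : Set V)
    (hunion : V₁ ∪ V₂ = Set.univ) (hinter : V₁ ∩ V₂ = {v})
    (hsep : ∀ a ∈ V₁, ∀ b ∈ V₂, a ≠ v → b ≠ v → ¬ G.Adj a b)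
    (θ θ₁ θ₂ : V → ℤ)
    (hθ₁ : ∀ x, θ₁ x = if G.Adj v x then θ x - 1 else θ x)
    (S₁ : Set V) (hS₁sub : S₁ ⊆ V₁ \ {v})
    (hS₁full : activationClosureIn G θ₁ (V₁ \ {v}) S₁ = V₁ \ {v})
    (hS₁opt : ∀ T ⊆ V₁ \ {v}, activationClosureIn G θ₁ (V₁ \ {v}) T = V₁ \ {v} →
      S₁.ncard ≤ T.ncard)
    (hS₁max : ∀ T ⊆ V₁ \ {v}, activationClosureIn G θ₁ (V₁ \ {v}) T = V₁ \ {v} →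
      T.ncard = S₁.ncard →
      (G.neighborSet v ∩ V₁ ∩ activationClosureIn G θ V₁ T).ncard ≤
        (G.neighborSet v ∩ V₁ ∩ activationClosureIn G θ V₁ S₁).ncard)
    (hθ₂ : ∀ x, θ₂ x = if x = v then
        θ v - ((G.neighborSet v ∩ V₁ ∩ activationClosureIn G θ V₁ S₁).ncard : ℤ)
      else θ x)
    (S₂ : Set V) (hS₂sub : S₂ ⊆ V₂)
    (hS₂full : activationClosureIn G θ₂ V₂ S₂ = V₂)
    (hS₂opt : ∀ T ⊆ V₂, activationClosureIn G θ₂ V₂ T = V₂ → S₂.ncard ≤ T.ncard) :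
    (activationClosureIn G θ Set.univ (S₁ ∪ S₂) = Set.univ ∧
      ∀ T : Set V, activationClosureIn G θ Set.univ T = Set.univ →
        (S₁ ∪ S₂).ncard ≤ T.ncard) ∧
    minSeedIn G θ Set.univ = minSeedIn G θ₁ (V₁ \ {v}) + minSeedIn G θ₂ V₂ := by
  -- basic facts
  have hv12 : v ∈ V₁ ∩ V₂ := by rw [hinter]; exact rfl
  have hvV₁ : v ∈ V₁ := hv12.1
  have hvV₂ : v ∈ V₂ := hv12.2
  have hmemV : ∀ x : V, x ∈ V₁ ∨ x ∈ V₂ := fun x => by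
    have hx : x ∈ V₁ ∪ V₂ := by rw [hunion]; trivial
    exact hx
  have heqv : ∀ x, x ∈ V₁ → x ∈ V₂ → x = v := fun x h1 h2 => by
    have hx : x ∈ V₁ ∩ V₂ := ⟨h1, h2⟩
    rw [hinter] at hx; exact hx
  have hvnotN : v ∉ G.neighborSet v := fun h => G.irrefl h
  have hN₁ : ∀ u, u ∈ V₁ → u ≠ v → G.neighborSet u ⊆ V₁ := by
    intro u hu hne b hb
    rcases hmemV b with h | h
    · exact h
    · by_cases hbv : b = v
      · exact hbv ▸ hvV₁
      · exact absurd hb (hsep u hu b h hne hbv)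
  have hN₂ : ∀ u, u ∈ V₂ → u ≠ v → G.neighborSet u ⊆ V₂ := by
    intro u hu hne b hb
    rcases hmemV b with h | h
    · by_cases hbv : b = v
      · exact hbv ▸ hvV₂
      · have hadj : G.Adj u b := hb
        exact absurd hadj.symm (hsep b h u hu hbv hne)
    · exact h
  have hsplitv : ∀ A : Set V, ((A ∩ G.neighborSet v ∩ Set.univ).ncard : ℤ)
      = ((A ∩ G.neighborSet v ∩ V₁).ncard : ℤ) + ((A ∩ G.neighborSet v ∩ V₂).ncard : ℤ) := by
    intro A
    have hdis : Disjoint (A ∩ G.neighborSet v ∩ V₁) (A ∩ G.neighborSet v ∩ V₂) := by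
      rw [Set.disjoint_left]
      rintro x ⟨⟨_, hx1⟩, hx2⟩ ⟨_, hx3⟩
      have hxv : x = v := heqv x hx2 hx3
      exact hvnotN (hxv ▸ hx1)
    have hun : A ∩ G.neighborSet v ∩ Set.univ
        = (A ∩ G.neighborSet v ∩ V₁) ∪ (A ∩ G.neighborSet v ∩ V₂) := by
      rw [← Set.inter_union_distrib_left, hunion]
    rw [hun, Set.ncard_union_eq hdis (Set.toFinite _) (Set.toFinite _)]
    push_cast; ring
  set W₁ := V₁ \ {v} with hW₁def
  have hvW₁ : v ∉ W₁ := fun h => h.2 rfl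
  have hW₁V₁ : W₁ ⊆ V₁ := Set.diff_subset
  set cS : ℤ := ((G.neighborSet v ∩ V₁ ∩ activationClosureIn G θ V₁ S₁).ncard : ℤ) with hcSdef
  have hS₁V₁ : S₁ ⊆ V₁ := hS₁sub.trans hW₁V₁
  have hScard : (S₁ ∪ S₂).ncard = S₁.ncard + S₂.ncard := by
    have hdis : Disjoint S₁ S₂ := by
      rw [Set.disjoint_left]
      intro x hx1 hx2
      exact (hS₁sub hx1).2 (heqv x (hS₁sub hx1).1 (hS₂sub hx2))
    rw [Set.ncard_union_eq hdis (Set.toFinite _) (Set.toFinite _)]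
  -- PART 1 : S₁ ∪ S₂ is a target set
  set D := activationClosureIn G θ Set.univ (S₁ ∪ S₂) with hDdef
  have hDclosed := closed_closureIn G θ Set.univ (S₁ ∪ S₂)
  have hS₁D : S₁ ⊆ D := Set.subset_union_left.trans (subset_closureIn G θ _ _)
  have hS₂D : S₂ ⊆ D := Set.subset_union_right.trans (subset_closureIn G θ _ _)
  -- Step 1: closure of S₁ in (V₁, θ) is inside D
  have hDV₁closed : activationClosedIn G θ V₁ (D ∩ V₁) := by
    intro u hu hcnt
    refine ⟨hDclosed u (Set.mem_univ u) (hcnt.trans (ncard_cast_mono ?_)), hu⟩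
    intro x hx; exact ⟨⟨hx.1.1.1, hx.1.2⟩, Set.mem_univ x⟩
  have hC₁D : activationClosureIn G θ V₁ S₁ ⊆ D :=
    (closureIn_subset G θ (Set.subset_inter hS₁D hS₁V₁) Set.inter_subset_right
      hDV₁closed).trans Set.inter_subset_left
  -- Step 2: V₂ ⊆ D
  have hDV₂closed : activationClosedIn G θ₂ V₂ (D ∩ V₂) := by
    intro u hu hcnt
    refine ⟨?_, hu⟩
    by_cases huv : u = v
    · subst huv
      apply hDclosed u (Set.mem_univ u)
      rw [hsplitv D]
      have h1 : cS ≤ ((D ∩ G.neighborSet u ∩ V₁).ncard : ℤ) := by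
        rw [hcSdef]
        apply ncard_cast_mono
        intro x hx
        exact ⟨⟨hC₁D hx.2, hx.1.1⟩, hx.1.2⟩
      have h2 : θ₂ u ≤ ((D ∩ G.neighborSet u ∩ V₂).ncard : ℤ) :=
        hcnt.trans (ncard_cast_mono (fun x hx => ⟨⟨hx.1.1.1, hx.1.2⟩, hx.2⟩))
      have h3 : θ₂ u = θ u - cS := by rw [hθ₂ u, if_pos rfl]
      linarith
    · apply hDclosed u (Set.mem_univ u)
      have h3 : θ₂ u = θ u := by rw [hθ₂ u, if_neg huv]
      rw [← h3]
      exact hcnt.trans (ncard_cast_mono fun x hx => ⟨⟨hx.1.1.1, hx.1.2⟩, Set.mem_univ x⟩)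
  have hV₂D : V₂ ⊆ D := by
    have h := closureIn_subset G θ₂ (Set.subset_inter hS₂D hS₂sub)
      Set.inter_subset_right hDV₂closed
    rw [hS₂full] at h
    exact h.trans Set.inter_subset_left
  have hvD : v ∈ D := hV₂D hvV₂
  -- Step 3: W₁ ⊆ D
  have hDW₁closed : activationClosedIn G θ₁ W₁ (D ∩ W₁) := by
    intro u hu hcnt
    refine ⟨?_, hu⟩
    apply hDclosed u (Set.mem_univ u)
    by_cases hadj : G.Adj v u
    · have h3 : θ₁ u = θ u - 1 := by rw [hθ₁ u, if_pos hadj]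
      have hsub : insert v ((D ∩ W₁) ∩ G.neighborSet u ∩ W₁) ⊆ D ∩ G.neighborSet u ∩ Set.univ := by
        intro x hx
        rcases Set.mem_insert_iff.1 hx with rfl | hx
        · exact ⟨⟨hvD, hadj.symm⟩, Set.mem_univ x⟩
        · exact ⟨⟨hx.1.1.1, hx.1.2⟩, Set.mem_univ x⟩
      have hcard := Set.ncard_insert_of_notMem
        (fun h : v ∈ (D ∩ W₁) ∩ G.neighborSet u ∩ W₁ => hvW₁ h.2) (Set.toFinite _)
      have hmono := ncard_cast_mono hsub
      rw [hcard] at hmono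
      push_cast at hmono
      linarith
    · have h3 : θ₁ u = θ u := by rw [hθ₁ u, if_neg hadj]
      rw [← h3]
      exact hcnt.trans (ncard_cast_mono fun x hx => ⟨⟨hx.1.1.1, hx.1.2⟩, Set.mem_univ x⟩)
  have hW₁D : W₁ ⊆ D := by
    have h := closureIn_subset G θ₁ (Set.subset_inter hS₁D hS₁sub)
      Set.inter_subset_right hDW₁closed
    rw [hS₁full] at h
    exact h.trans Set.inter_subset_left
  have hDuniv : D = Set.univ := by
    apply Set.eq_univ_of_univ_subset
    intro x _
    rcases hmemV x with h | h
    · by_cases hxv : x = v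
      · exact hxv ▸ hvD
      · exact hW₁D ⟨h, hxv⟩
    · exact hV₂D h
  -- PART 2 : optimality
  have hopt : ∀ T : Set V, activationClosureIn G θ Set.univ T = Set.univ →
      (S₁ ∪ S₂).ncard ≤ T.ncard := by
    intro T hT
    set T₁ := T ∩ W₁ with hT₁def
    set T₂ := T ∩ V₂ with hT₂def
    have hTsub : T ⊆ T₁ ∪ T₂ := by
      intro t ht
      rcases hmemV t with h | h
      · by_cases htv : t = v
        · exact Or.inr ⟨ht, htv ▸ hvV₂⟩
        · exact Or.inl ⟨ht, h, htv⟩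
      · exact Or.inr ⟨ht, h⟩
    have hTcard : T₁.ncard + T₂.ncard ≤ T.ncard := by
      have hdis : Disjoint T₁ T₂ := by
        rw [Set.disjoint_left]
        rintro x ⟨-, hx1, hx2⟩ ⟨-, hx3⟩
        exact hx2 (heqv x hx1 hx3)
      calc T₁.ncard + T₂.ncard = (T₁ ∪ T₂).ncard :=
            (Set.ncard_union_eq hdis (Set.toFinite _) (Set.toFinite _)).symm
        _ ≤ T.ncard := Set.ncard_le_ncard
            (Set.union_subset Set.inter_subset_left Set.inter_subset_left) (Set.toFinite _)
    -- claim (a) : T₁ is a θ₁-target set for W₁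
    have hE₁ : activationClosureIn G θ₁ W₁ T₁ = W₁ := by
      apply Set.Subset.antisymm (closureIn_subset_base G θ₁ Set.inter_subset_right)
      set E₁ := activationClosureIn G θ₁ W₁ T₁ with hE₁def
      have hE₁W₁ : E₁ ⊆ W₁ := closureIn_subset_base G θ₁ Set.inter_subset_right
      have hE₁closed := closed_closureIn G θ₁ W₁ T₁
      have hclosed : activationClosedIn G θ Set.univ (E₁ ∪ V₂) := by
        intro u _ hcnt
        by_cases huV₂ : u ∈ V₂
        · exact Or.inr huV₂
        have huV₁ : u ∈ V₁ := (hmemV u).resolve_right huV₂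
        have hune : u ≠ v := fun h => huV₂ (h ▸ hvV₂)
        left
        apply hE₁closed u ⟨huV₁, hune⟩
        by_cases hadj : G.Adj v u
        · have hsub : (E₁ ∪ V₂) ∩ G.neighborSet u ∩ Set.univ
              ⊆ insert v (E₁ ∩ G.neighborSet u ∩ W₁) := by
            rintro x ⟨⟨hx1, hx2⟩, -⟩
            rcases hx1 with hx1 | hx1
            · exact Set.mem_insert_iff.2 (Or.inr ⟨⟨hx1, hx2⟩, hE₁W₁ hx1⟩)
            · exact Set.mem_insert_iff.2 (Or.inl (heqv x (hN₁ u huV₁ hune hx2) hx1))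
          have hcard := Set.ncard_insert_of_notMem
            (fun h : v ∈ E₁ ∩ G.neighborSet u ∩ W₁ => hvW₁ h.2) (Set.toFinite _)
          have hmono := ncard_cast_mono hsub
          rw [hcard] at hmono
          push_cast at hmono
          have h3 : θ₁ u = θ u - 1 := by rw [hθ₁ u, if_pos hadj]
          linarith
        · have hsub : (E₁ ∪ V₂) ∩ G.neighborSet u ∩ Set.univ
              ⊆ E₁ ∩ G.neighborSet u ∩ W₁ := by
            rintro x ⟨⟨hx1, hx2⟩, -⟩
            rcases hx1 with hx1 | hx1
            · exact ⟨⟨hx1, hx2⟩, hE₁W₁ hx1⟩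
            · have hxv := heqv x (hN₁ u huV₁ hune hx2) hx1
              have hadj' : G.Adj u v := by rw [← hxv]; exact hx2
              exact absurd hadj'.symm hadj
          have h3 : θ₁ u = θ u := by rw [hθ₁ u, if_neg hadj]
          rw [h3]
          exact hcnt.trans (ncard_cast_mono hsub)
      have huniv : Set.univ ⊆ E₁ ∪ V₂ := by
        have h := closureIn_subset G θ
          (fun t ht => (hTsub ht).elim
            (fun h => Or.inl (subset_closureIn G θ₁ W₁ T₁ h))
            (fun h => Or.inr h.2))
          (Set.subset_univ _) hclosed
        rw [hT] at h; exact h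
      intro x hx
      rcases huniv (Set.mem_univ x) with h | h
      · exact h
      · exact absurd (heqv x hx.1 h) hx.2
    have hT₁card : S₁.ncard ≤ T₁.ncard := hS₁opt T₁ Set.inter_subset_right hE₁
    -- reusable V₂-side lemma
    have hFlemma : ∀ F : Set V, F ⊆ V₂ → activationClosedIn G θ₂ V₂ F → v ∈ F →
        T₂ ⊆ F → V₂ ⊆ F := by
      intro F hFV₂ hFclosed hvF hT₂F
      have hclosed : activationClosedIn G θ Set.univ (F ∪ V₁) := by
        intro u _ hcnt
        by_cases huV₁ : u ∈ V₁
        · exact Or.inr huV₁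
        have huV₂ : u ∈ V₂ := (hmemV u).resolve_left huV₁
        have hune : u ≠ v := fun h => huV₁ (h ▸ hvV₁)
        left
        apply hFclosed u huV₂
        have h3 : θ₂ u = θ u := by rw [hθ₂ u, if_neg hune]
        rw [h3]
        refine hcnt.trans (ncard_cast_mono ?_)
        rintro x ⟨⟨hx1, hx2⟩, -⟩
        have hxV₂ : x ∈ V₂ := hN₂ u huV₂ hune hx2
        rcases hx1 with hx1 | hx1
        · exact ⟨⟨hx1, hx2⟩, hxV₂⟩
        · have hxv := heqv x hx1 hxV₂
          exact ⟨⟨hxv ▸ hvF, hx2⟩, hxV₂⟩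
      have huniv : Set.univ ⊆ F ∪ V₁ := by
        have h := closureIn_subset G θ
          (fun t ht => (hTsub ht).elim
            (fun h => Or.inr h.2.1)
            (fun h => Or.inl (hT₂F h)))
          (Set.subset_univ _) hclosed
        rw [hT] at h; exact h
      intro x hx
      rcases huniv (Set.mem_univ x) with h | h
      · exact h
      · exact (heqv x h hx) ▸ hvF
    rw [hScard]
    by_cases hcase : T₁.ncard = S₁.ncard
    · -- Case |T₁| = |S₁|
      have hcT : (G.neighborSet v ∩ V₁ ∩ activationClosureIn G θ V₁ T₁).ncard ≤
          (G.neighborSet v ∩ V₁ ∩ activationClosureIn G θ V₁ S₁).ncard :=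
        hS₁max T₁ Set.inter_subset_right hE₁ hcase
      set F := activationClosureIn G θ₂ V₂ T₂ with hFdef
      have hFV₂ : F ⊆ V₂ := closureIn_subset_base G θ₂ Set.inter_subset_right
      have hFclosed := closed_closureIn G θ₂ V₂ T₂
      have hT₂F : T₂ ⊆ F := subset_closureIn G θ₂ V₂ T₂
      set K₁ := activationClosureIn G θ V₁ T₁ with hK₁def
      have hK₁V₁ : K₁ ⊆ V₁ := closureIn_subset_base G θ (Set.inter_subset_right.trans hW₁V₁)
      have hK₁closed := closed_closureIn G θ V₁ T₁
      have hcTZ : ((G.neighborSet v ∩ V₁ ∩ K₁).ncard : ℤ) ≤ cS := by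
        rw [hcSdef]; exact_mod_cast hcT
      have hvF : v ∈ F := by
        by_cases hvF0 : v ∈ F
        · exact hvF0
        by_cases hvK : v ∈ K₁
        · -- then θ₂ v ≤ 0
          set L := activationClosureIn G θ W₁ T₁ with hLdef
          have hLW₁ : L ⊆ W₁ := closureIn_subset_base G θ Set.inter_subset_right
          have hLclosed := closed_closureIn G θ W₁ T₁
          have hLthm : θ v ≤ ((L ∩ G.neighborSet v ∩ W₁).ncard : ℤ) := by
            by_contra hlt
            have hclosedL : activationClosedIn G θ V₁ L := by
              intro u hu hcnt'
              have hsub : L ∩ G.neighborSet u ∩ V₁ ⊆ L ∩ G.neighborSet u ∩ W₁ :=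
                fun x hx => ⟨hx.1, hLW₁ hx.1.1⟩
              by_cases huv : u = v
              · subst huv
                exact absurd (hcnt'.trans (ncard_cast_mono hsub)) hlt
              · exact hLclosed u ⟨hu, huv⟩ (hcnt'.trans (ncard_cast_mono hsub))
            have hKL : K₁ ⊆ L := closureIn_subset G θ (subset_closureIn G θ W₁ T₁)
              (hLW₁.trans hW₁V₁) hclosedL
            exact hvW₁ (hLW₁ (hKL hvK))
          have hK₁W₁closed : activationClosedIn G θ W₁ (K₁ ∩ W₁) := by
            intro u hu hcnt'
            refine ⟨hK₁closed u hu.1 (hcnt'.trans (ncard_cast_mono ?_)), hu⟩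
            exact fun x hx => ⟨⟨hx.1.1.1, hx.1.2⟩, hx.2.1⟩
          have hLK : L ⊆ K₁ :=
            (closureIn_subset G θ
              (Set.subset_inter (subset_closureIn G θ V₁ T₁) Set.inter_subset_right)
              Set.inter_subset_right hK₁W₁closed).trans Set.inter_subset_left
          have h1 : θ v ≤ ((G.neighborSet v ∩ V₁ ∩ K₁).ncard : ℤ) :=
            hLthm.trans (ncard_cast_mono (fun x hx => ⟨⟨hx.1.2, hx.2.1⟩, hLK hx.1.1⟩))
          have h2 : θ₂ v ≤ 0 := by
            rw [hθ₂ v, if_pos rfl]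
            linarith
          exact hFclosed v hvV₂
            (h2.trans (by exact_mod_cast Nat.zero_le _))
        · -- v ∉ K₁ : F ∪ K₁ is θ-closed in univ
          have hclosedA : activationClosedIn G θ Set.univ (F ∪ K₁) := by
            intro u _ hcnt'
            by_cases huv : u = v
            · subst huv
              left
              apply hFclosed u hvV₂
              rw [hθ₂ u, if_pos rfl]
              rw [hsplitv (F ∪ K₁)] at hcnt'
              have hA : ((F ∪ K₁) ∩ G.neighborSet u ∩ V₁).ncard ≤
                  (G.neighborSet u ∩ V₁ ∩ K₁).ncard := by
                apply Set.ncard_le_ncard ?_ (Set.toFinite _)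
                rintro x ⟨⟨hx1, hx2⟩, hx3⟩
                rcases hx1 with hx1 | hx1
                · have hxv := heqv x hx3 (hFV₂ hx1)
                  exact absurd (hxv ▸ hx2) hvnotN
                · exact ⟨⟨hx2, hx3⟩, hx1⟩
              have hB : ((F ∪ K₁) ∩ G.neighborSet u ∩ V₂).ncard ≤
                  (F ∩ G.neighborSet u ∩ V₂).ncard := by
                apply Set.ncard_le_ncard ?_ (Set.toFinite _)
                rintro x ⟨⟨hx1, hx2⟩, hx3⟩
                rcases hx1 with hx1 | hx1
                · exact ⟨⟨hx1, hx2⟩, hx3⟩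
                · have hxv := heqv x (hK₁V₁ hx1) hx3
                  exact absurd (hxv ▸ hx1) hvK
              have hAZ : (((F ∪ K₁) ∩ G.neighborSet u ∩ V₁).ncard : ℤ) ≤
                  ((G.neighborSet u ∩ V₁ ∩ K₁).ncard : ℤ) := by exact_mod_cast hA
              have hBZ : (((F ∪ K₁) ∩ G.neighborSet u ∩ V₂).ncard : ℤ) ≤
                  ((F ∩ G.neighborSet u ∩ V₂).ncard : ℤ) := by exact_mod_cast hB
              linarith
            · by_cases huV₂ : u ∈ V₂
              · left
                apply hFclosed u huV₂
                rw [hθ₂ u, if_neg huv]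
                refine hcnt'.trans (ncard_cast_mono ?_)
                rintro x ⟨⟨hx1, hx2⟩, -⟩
                have hxV₂ : x ∈ V₂ := hN₂ u huV₂ huv hx2
                rcases hx1 with hx1 | hx1
                · exact ⟨⟨hx1, hx2⟩, hxV₂⟩
                · exact absurd ((heqv x (hK₁V₁ hx1) hxV₂) ▸ hx1) hvK
              · right
                have huV₁ : u ∈ V₁ := (hmemV u).resolve_right huV₂
                apply hK₁closed u huV₁
                refine hcnt'.trans (ncard_cast_mono ?_)
                rintro x ⟨⟨hx1, hx2⟩, -⟩
                have hxV₁ : x ∈ V₁ := hN₁ u huV₁ huv hx2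
                rcases hx1 with hx1 | hx1
                · exact absurd ((heqv x hxV₁ (hFV₂ hx1)) ▸ hx1) hvF0
                · exact ⟨⟨hx1, hx2⟩, hxV₁⟩
          have huniv : Set.univ ⊆ F ∪ K₁ := by
            have h := closureIn_subset G θ
              (fun t ht => (hTsub ht).elim
                (fun h => Or.inr (subset_closureIn G θ V₁ T₁ h))
                (fun h => Or.inl (hT₂F h)))
              (Set.subset_univ _) hclosedA
            rw [hT] at h; exact h
          exact (huniv (Set.mem_univ v)).resolve_right hvK
      have hV₂F := hFlemma F hFV₂ hFclosed hvF hT₂F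
      have hT₂card : S₂.ncard ≤ T₂.ncard :=
        hS₂opt T₂ Set.inter_subset_right
          (by rw [← hFdef]; exact Set.Subset.antisymm hFV₂ hV₂F)
      calc S₁.ncard + S₂.ncard ≤ T₁.ncard + T₂.ncard := by omega
        _ ≤ T.ncard := hTcard
    · -- Case |T₁| > |S₁|
      have hT₁gt : S₁.ncard + 1 ≤ T₁.ncard := by omega
      set F := activationClosureIn G θ₂ V₂ (insert v T₂) with hFdef
      have hins : insert v T₂ ⊆ V₂ := Set.insert_subset hvV₂ Set.inter_subset_right
      have hFV₂ : F ⊆ V₂ := closureIn_subset_base G θ₂ hins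
      have hFclosed := closed_closureIn G θ₂ V₂ (insert v T₂)
      have hvF : v ∈ F := subset_closureIn G θ₂ V₂ _ (Set.mem_insert v T₂)
      have hT₂F : T₂ ⊆ F := (Set.subset_insert v T₂).trans (subset_closureIn G θ₂ V₂ _)
      have hV₂F := hFlemma F hFV₂ hFclosed hvF hT₂F
      have hS₂card : S₂.ncard ≤ T₂.ncard + 1 := by
        have h := hS₂opt (insert v T₂) hins
          (by rw [← hFdef]; exact Set.Subset.antisymm hFV₂ hV₂F)
        exact h.trans (Set.ncard_insert_le v T₂)
      omega
  refine ⟨⟨hDuniv, hopt⟩, ?_⟩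
  have hm : minSeedIn G θ Set.univ = (S₁ ∪ S₂).ncard :=
    minSeedIn_eq G θ (Set.subset_univ _) hDuniv (fun T _ hTfull => hopt T hTfull)
  have hm₁ : minSeedIn G θ₁ W₁ = S₁.ncard := minSeedIn_eq G θ₁ hS₁sub hS₁full hS₁opt
  have hm₂ : minSeedIn G θ₂ V₂ = S₂.ncard := minSeedIn_eq G θ₂ hS₂sub hS₂full hS₂opt
  rw [hm, hm₁, hm₂, hScard]
end
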